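/- arXiv:2507.04220 — 11 statements merged into one kernel-verified Lean document; each statement's English description precedes it below -/
import Mathlib

section
/- Let C be an abelian category and let (T, F) be a torsion pair in C. Then (Infl T, Infl F) is a monomorphism factorization system in C. -/
open CategoryTheory CategoryTheory.Limits

namespace TorsionFS

variable {C : Type*} [Category C] [Abelian C]

/-- A torsion pair `(T, F)` in an abelian category. -/
structure IsTorsionPair (T F : Set C) : Prop where
  isoClosed_torsion : ∀ {X Y : C}, (X ≅ Y) → X ∈ T → Y ∈ T
  isoClosed_free : ∀ {X Y : C}, (X ≅ Y) → X ∈ F → Y ∈ F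
  hom_zero : ∀ {X Y : C}, X ∈ T → Y ∈ F → ∀ f : X ⟶ Y, f = 0
  exists_ses : ∀ X : C, ∃ (T' F' : C) (_ : T' ∈ T) (_ : F' ∈ F)
      (i : T' ⟶ X) (p : X ⟶ F') (w : i ≫ p = 0),
      (ShortComplex.mk i p w).ShortExact

/-- For monomorphisms `l`, `r`, `l ⊥ r` iff `Hom(coker l, coker r) = 0`. -/
def MonoPerp {A B X Y : C} (l : A ⟶ B) (r : X ⟶ Y) : Prop :=
  ∀ φ : cokernel l ⟶ cokernel r, φ = 0

/-- `Infl U`: monomorphisms whose cokernel lies in `U`. -/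
def Infl (U : Set C) : MorphismProperty C :=
  fun _ _ f => Mono f ∧ cokernel f ∈ U

/-- `Coker L`: objects isomorphic to the cokernel of some morphism in `L`. -/
def CokerClass (L : MorphismProperty C) : Set C :=
  {Z | ∃ (X Y : C) (f : X ⟶ Y), L f ∧ Nonempty (Z ≅ cokernel f)}

/-- A monomorphism factorization system `(L, R)` in an abelian category. -/
structure IsMonoFactorizationSystem (L R : MorphismProperty C) : Prop where
  mono_of_L : ∀ {X Y : C} (f : X ⟶ Y), L f → Mono f
  mono_of_R : ∀ {X Y : C} (f : X ⟶ Y), R f → Mono f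
  factor : ∀ {X Y : C} (f : X ⟶ Y), Mono f →
    ∃ (K : C) (l : X ⟶ K) (r : K ⟶ Y), L l ∧ R r ∧ l ≫ r = f
  left_eq : ∀ {X Y : C} (f : X ⟶ Y),
    L f ↔ (Mono f ∧ ∀ {Z W : C} (g : Z ⟶ W), R g → MonoPerp f g)
  right_eq : ∀ {Z W : C} (g : Z ⟶ W),
    R g ↔ (Mono g ∧ ∀ {X Y : C} (f : X ⟶ Y), L f → MonoPerp f g)

open ZeroObject

/-- The zero morphism out of the zero object is in `Infl U` if `U` is closed under
isomorphism and contains the target. -/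
lemma infl_zero_from {U : Set C}
    (hiso : ∀ {X Y : C}, (X ≅ Y) → X ∈ U → Y ∈ U)
    {W : C} (hW : W ∈ U) : Infl U (0 : (0 : C) ⟶ W) := by
  refine ⟨⟨fun a b _ => (isZero_zero C).eq_of_tgt a b⟩,
    hiso (cokernelZeroIsoTarget (X := (0 : C)) (Y := W)).symm hW⟩

lemma mem_T_of_perp {T F : Set C} (h : IsTorsionPair T F) (X₀ : C)
    (hp : ∀ {Z W : C} (g : Z ⟶ W), Infl F g → ∀ φ : X₀ ⟶ cokernel g, φ = 0) :
    X₀ ∈ T := by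
  obtain ⟨T', F', hT', hF', i, p, w, hse⟩ := h.exists_ses X₀
  haveI := hse.mono_f
  have hg0 := infl_zero_from h.isoClosed_free hF'
  have hp0 : p = 0 := by
    have := hp _ hg0 (p ≫ (cokernelZeroIsoTarget (X := (0 : C)) (Y := F')).inv)
    rw [← cancel_mono (cokernelZeroIsoTarget (X := (0 : C)) (Y := F')).inv]
    simpa using this
  haveI : Epi i := ((ShortComplex.mk i p w).exact_iff_epi hp0).mp hse.exact
  haveI : IsIso i := isIso_of_mono_of_epi i
  exact h.isoClosed_torsion (asIso i) hT'

lemma mem_F_of_perp {T F : Set C} (h : IsTorsionPair T F) (X₀ : C)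
    (hp : ∀ {Z W : C} (f : Z ⟶ W), Infl T f → ∀ φ : cokernel f ⟶ X₀, φ = 0) :
    X₀ ∈ F := by
  obtain ⟨T', F', hT', hF', i, p, w, hse⟩ := h.exists_ses X₀
  haveI := hse.epi_g
  have hf0 := infl_zero_from h.isoClosed_torsion hT'
  have hi0 : i = 0 := by
    have := hp _ hf0 ((cokernelZeroIsoTarget (X := (0 : C)) (Y := T')).hom ≫ i)
    rw [← cancel_epi (cokernelZeroIsoTarget (X := (0 : C)) (Y := T')).hom]
    simpa using this
  haveI : Mono p := ((ShortComplex.mk i p w).exact_iff_mono hi0).mp hse.exact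
  haveI : IsIso p := isIso_of_mono_of_epi p
  exact h.isoClosed_free (asIso p).symm hF'

/-- if `(T, F)` is a torsion pair in an abelian category `C`, then
`(Infl T, Infl F)` is a monomorphism factorization system in `C`. -/
theorem torsionPair_infl_isMonoFactorizationSystem
    (T F : Set C) (h : IsTorsionPair T F) :
    IsMonoFactorizationSystem (Infl T) (Infl F) := by
  have perp : ∀ {X Y Z W : C} (f : X ⟶ Y) (g : Z ⟶ W),
      Infl T f → Infl F g → MonoPerp f g :=
    fun f g hf hg φ => h.hom_zero hf.2 hg.2 φ
  refine ⟨fun f hf => hf.1, fun f hf => hf.1, ?_, ?_, ?_⟩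
  · intro X Y f hf
    haveI : Mono f := hf
    obtain ⟨T', F', hT', hF', i, p, w, hse⟩ := h.exists_ses (cokernel f)
    haveI := hse.epi_g
    haveI := hse.mono_f
    set q : Y ⟶ F' := cokernel.π f ≫ p with hq
    have hfq : f ≫ q = 0 := by rw [hq, cokernel.condition_assoc, zero_comp]
    refine ⟨kernel q, kernel.lift q f hfq, kernel.ι q, ?_, ?_, kernel.lift_ι q f hfq⟩
    · -- left part is an inflation with cokernel in T
      set l : X ⟶ kernel q := kernel.lift q f hfq with hl
      set r : kernel q ⟶ Y := kernel.ι q with hr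
      have hlr : l ≫ r = f := kernel.lift_ι q f hfq
      haveI hml : Mono l := by
        have : Mono (l ≫ r) := hlr ▸ inferInstanceAs (Mono f)
        exact mono_of_mono l r
      -- construct t : kernel q ⟶ T'
      have hrπp : (r ≫ cokernel.π f) ≫ p = 0 := by
        rw [Category.assoc, ← hq, kernel.condition]
      obtain ⟨t, ht⟩ := KernelFork.IsLimit.lift' hse.fIsKernel (r ≫ cokernel.π f) hrπp
      have ht' : t ≫ i = r ≫ cokernel.π f := ht
      have hlt : l ≫ t = 0 := by
        rw [← cancel_mono i, Category.assoc, ht', zero_comp, ← Category.assoc, hlr,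
          cokernel.condition]
      have hex : (ShortComplex.mk l t hlt).Exact := by
        rw [ShortComplex.exact_iff_exact_up_to_refinements]
        intro A x₂ hx₂
        have hx₂rπ : (x₂ ≫ r) ≫ cokernel.π f = 0 := by
          rw [Category.assoc, ← ht', ← Category.assoc, hx₂, zero_comp]
        refine ⟨A, 𝟙 A, inferInstance, Abelian.monoLift f (x₂ ≫ r) hx₂rπ, ?_⟩
        rw [Category.id_comp, ← cancel_mono r, Category.assoc, hlr,
          Abelian.monoLift_comp]
      haveI het : Epi t := by
        rw [epi_iff_surjective_up_to_refinements]
        intro A a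
        obtain ⟨A', e, he, b, hb⟩ :=
          surjective_up_to_refinements_of_epi (cokernel.π f) (a ≫ i)
        have hbq : b ≫ q = 0 := by
          rw [hq, ← Category.assoc, ← hb, Category.assoc, Category.assoc, w,
            comp_zero, comp_zero]
        refine ⟨A', e, he, kernel.lift q b hbq, ?_⟩
        rw [← cancel_mono i]
        simp only [Category.assoc, ht']
        rw [hr, kernel.lift_ι_assoc]
        exact hb
      have hse₃ : (ShortComplex.mk l t hlt).ShortExact := ShortComplex.ShortExact.mk' hex hml het
      have iso : cokernel l ≅ T' :=
        IsColimit.coconePointUniqueUpToIso (cokernelIsCokernel l) hse₃.gIsCokernel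
      exact ⟨hml, h.isoClosed_torsion iso.symm hT'⟩
    · -- right part is an inflation with cokernel in F
      haveI : Epi q := by rw [hq]; exact epi_comp _ _
      have hex : (ShortComplex.mk (kernel.ι q) q (kernel.condition q)).Exact :=
        ShortComplex.exact_of_f_is_kernel _ (kernelIsKernel q)
      have hse₂ : (ShortComplex.mk (kernel.ι q) q (kernel.condition q)).ShortExact :=
        ShortComplex.ShortExact.mk' hex inferInstance inferInstance
      have iso : cokernel (kernel.ι q) ≅ F' :=
        IsColimit.coconePointUniqueUpToIso (cokernelIsCokernel (kernel.ι q))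
          hse₂.gIsCokernel
      exact ⟨inferInstance, h.isoClosed_free iso.symm hF'⟩
  · intro X Y f
    constructor
    · exact fun hf => ⟨hf.1, fun g hg => perp f g hf hg⟩
    · rintro ⟨hm, hperp⟩
      exact ⟨hm, mem_T_of_perp h (cokernel f) (fun g hg φ => hperp g hg φ)⟩
  · intro Z W g
    constructor
    · exact fun hg => ⟨hg.1, fun f hf => perp f g hf hg⟩
    · rintro ⟨hm, hperp⟩
      exact ⟨hm, mem_F_of_perp h (cokernel g) (fun f hf φ => hperp f hf φ)⟩

end TorsionFS
end

section
/- Let C be an abelian category and let (L, R) be a monomorphism factorization system in C. Then (Coker L, Coker R) is a torsion pair in C. -/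
open CategoryTheory CategoryTheory.Limits

namespace TorsionFS

variable {C : Type*} [Category C] [Abelian C]

open ZeroObject

/-- if `(L, R)` is a monomorphism factorization system in an abelian
category `C`, then `(Coker L, Coker R)` is a torsion pair in `C`. -/
theorem monoFactorizationSystem_coker_isTorsionPair
    (L R : MorphismProperty C) (h : IsMonoFactorizationSystem L R) :
    IsTorsionPair (CokerClass L) (CokerClass R) := by
  constructor
  · rintro X Y e ⟨A, B, f, hf, ⟨i⟩⟩
    exact ⟨A, B, f, hf, ⟨e.symm.trans i⟩⟩
  · rintro X Y e ⟨A, B, f, hf, ⟨i⟩⟩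
    exact ⟨A, B, f, hf, ⟨e.symm.trans i⟩⟩
  · rintro X Y ⟨A, B, f, hf, ⟨e⟩⟩ ⟨Z, W, g, hg, ⟨e'⟩⟩ φ
    have hperp : MonoPerp f g := ((h.left_eq f).1 hf).2 g hg
    have : e.inv ≫ φ ≫ e'.hom = 0 := hperp _
    calc φ = e.hom ≫ (e.inv ≫ φ ≫ e'.hom) ≫ e'.inv := by simp
    _ = 0 := by rw [this]; simp
  · intro X
    obtain ⟨K, l, r, hl, hr, hfac⟩ := h.factor (0 : (0 : C) ⟶ X) inferInstance
    have hK : K ∈ CokerClass L := by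
      refine ⟨_, _, l, hl, ⟨?_⟩⟩
      have hl0 : l = 0 := Limits.zero_of_source_iso_zero l (Iso.refl 0)
      exact (by rw [hl0]; exact cokernelZeroIsoTarget.symm)
    have hF : cokernel r ∈ CokerClass R := ⟨_, _, r, hr, ⟨Iso.refl _⟩⟩
    have hmono : Mono r := h.mono_of_R r hr
    refine ⟨K, cokernel r, hK, hF, r, cokernel.π r, cokernel.condition r, ?_⟩
    exact { exact := ShortComplex.exact_of_g_is_cokernel _ (cokernelIsCokernel r),
            mono_f := hmono, epi_g := by dsimp; infer_instance }

end TorsionFS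
end

section
/- Let C be an abelian category. The assignments (T, F) ↦ (Infl T, Infl F) and (L, R) ↦ (Coker L, Coker R) are mutually inverse: for every torsion pair (T, F) in C one has Coker(Infl T) = T and Coker(Infl F) = F, and for every monomorphism factorization system (L, R) in C one has Infl(Coker L) = L and Infl(Coker R) = R. -/
open CategoryTheory CategoryTheory.Limits

namespace TorsionFS

variable {C : Type*} [Category C] [Abelian C]

/-- the assignments `(T, F) ↦ (Infl T, Infl F)` and
`(L, R) ↦ (Coker L, Coker R)` are mutually inverse. -/
theorem torsionPair_monoFactorizationSystem_bijection :
    (∀ T F : Set C, IsTorsionPair T F →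
      CokerClass (Infl T) = T ∧ CokerClass (Infl F) = F) ∧
    (∀ L R : MorphismProperty C, IsMonoFactorizationSystem L R →
      Infl (CokerClass L) = L ∧ Infl (CokerClass R) = R) := by
  have key : ∀ (U : Set C), (∀ {X Y : C}, (X ≅ Y) → X ∈ U → Y ∈ U) →
      CokerClass (Infl U) = U := by
    intro U hU
    open ZeroObject in
    ext Z
    constructor
    · rintro ⟨X, Y, f, ⟨hm, hc⟩, ⟨e⟩⟩
      exact hU e.symm hc
    · intro hZ
      refine ⟨0, Z, 0, ⟨⟨fun g h _ => (isZero_zero C).eq_of_tgt g h⟩, ?_⟩,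
        ⟨(cokernelZeroIsoTarget (X := (0:C)) (Y := Z)).symm⟩⟩
      exact hU (cokernelZeroIsoTarget (X := (0:C)) (Y := Z)).symm hZ
  constructor
  · intro T F h
    exact ⟨key T h.isoClosed_torsion, key F h.isoClosed_free⟩
  · intro L R h
    constructor
    · ext X Y f
      constructor
      · rintro ⟨hm, X', Y', g, hg, ⟨e⟩⟩
        refine (h.left_eq f).2 ⟨hm, fun r hr φ => ?_⟩
        have h0 : e.inv ≫ φ = 0 := ((h.left_eq g).1 hg).2 r hr (e.inv ≫ φ)
        calc φ = e.hom ≫ (e.inv ≫ φ) := by simp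
          _ = 0 := by rw [h0]; simp
      · intro hf
        exact ⟨h.mono_of_L f hf, X, Y, f, hf, ⟨Iso.refl _⟩⟩
    · ext X Y f
      constructor
      · rintro ⟨hm, X', Y', g, hg, ⟨e⟩⟩
        refine (h.right_eq f).2 ⟨hm, fun l hl φ => ?_⟩
        have h0 : φ ≫ e.hom = 0 := ((h.right_eq g).1 hg).2 l hl (φ ≫ e.hom)
        calc φ = (φ ≫ e.hom) ≫ e.inv := by simp
          _ = 0 := by rw [h0]; simp
      · intro hf
        exact ⟨h.mono_of_R f hf, X, Y, f, hf, ⟨Iso.refl _⟩⟩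

end TorsionFS
end

section
/- Let C be an abelian category and let (T, F) be a torsion pair in C. Then (Defl T, Defl F) is an epimorphism factorization system in C. -/
/-!
Given an epimorphism `f`, split `ker f` by its torsion sequence `0 → T' → ker f → F' → 0` and
let `l` be the cokernel of `T' → ker f → X`, so that `f = r ∘ l`. Then `ker l ≅ T'`, and the
kernel sequence `0 → ker l → ker f → ker r → 0` of the composite (exact since `l` is epi) gives
`ker r ≅ F'`. Orthogonality in one direction is `Hom(T, F) = 0`; conversely, testing against
`A → 0` with `A` in `T` or `F` shows `Hom(ker f, F') = 0` for all `F' ∈ F` (resp. dually), which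
forces `ker f ∈ T` (resp. `ker g ∈ F`) because its torsion sequence degenerates.
-/

open CategoryTheory CategoryTheory.Limits

namespace TorsionFS

variable {C : Type*} [Category C] [Abelian C]

/-- For epimorphisms `l`, `r`, `l ⊥ r` iff `Hom(ker l, ker r) = 0`. -/
def EpiPerp {A B X Y : C} (l : A ⟶ B) (r : X ⟶ Y) : Prop :=
  ∀ φ : kernel l ⟶ kernel r, φ = 0

/-- `Defl U`: epimorphisms whose kernel lies in `U`. -/
def Defl (U : Set C) : MorphismProperty C :=
  fun _ _ f => Epi f ∧ kernel f ∈ U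

/-- `Ker L`: objects isomorphic to the kernel of some morphism in `L`. -/
def KerClass (L : MorphismProperty C) : Set C :=
  {Z | ∃ (X Y : C) (f : X ⟶ Y), L f ∧ Nonempty (Z ≅ kernel f)}

/-- An epimorphism factorization system `(L, R)` in an abelian category. -/
structure IsEpiFactorizationSystem (L R : MorphismProperty C) : Prop where
  epi_of_L : ∀ {X Y : C} (f : X ⟶ Y), L f → Epi f
  epi_of_R : ∀ {X Y : C} (f : X ⟶ Y), R f → Epi f
  factor : ∀ {X Y : C} (f : X ⟶ Y), Epi f →
    ∃ (K : C) (l : X ⟶ K) (r : K ⟶ Y), L l ∧ R r ∧ l ≫ r = f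
  left_eq : ∀ {X Y : C} (f : X ⟶ Y),
    L f ↔ (Epi f ∧ ∀ {Z W : C} (g : Z ⟶ W), R g → EpiPerp f g)
  right_eq : ∀ {Z W : C} (g : Z ⟶ W),
    R g ↔ (Epi g ∧ ∀ {X Y : C} (f : X ⟶ Y), L f → EpiPerp f g)

open ZeroObject

lemma shortExact_kernelMap_of_epi {X Y Z : C} {l : X ⟶ Y} {r : Y ⟶ Z} {f : X ⟶ Z}
    (hlr : l ≫ r = f) [Epi l] :
    (ShortComplex.mk (kernel.map l f (𝟙 X) r (by simp [← hlr]))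
      (kernel.map f r l (𝟙 Z) (by simp [← hlr])) (by ext; simp)).ShortExact := by
  subst hlr
  have hexact := kernelCokernelCompSequence_exact l r
  refine { exact := hexact.exact 0
           mono_f := inferInstanceAs (Mono ((kernelCokernelCompSequence l r).map' 0 1))
           epi_g := ?_ }
  exact (ShortComplex.exact_iff_epi _ ((isZero_cokernel_of_epi l).eq_of_tgt _ _)).1
    (hexact.exact 1)

lemma defl_zero_of_mem {U : Set C} (hU : ∀ {X Y : C}, (X ≅ Y) → X ∈ U → Y ∈ U) {A : C}
    (hA : A ∈ U) : Defl U (0 : A ⟶ 0) :=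
  ⟨inferInstance, hU kernelZeroIsoSource.symm hA⟩

lemma EpiPerp.eq_zero_of_zero_right {A B Z : C} {f : A ⟶ B} (hf : EpiPerp f (0 : Z ⟶ 0))
    (ψ : kernel f ⟶ Z) : ψ = 0 := by
  simpa using hf (ψ ≫ kernelZeroIsoSource.inv) =≫ kernelZeroIsoSource.hom

lemma EpiPerp.eq_zero_of_zero_left {Z X Y : C} {g : X ⟶ Y} (hg : EpiPerp (0 : Z ⟶ 0) g)
    (ψ : Z ⟶ kernel g) : ψ = 0 := by
  simpa using kernelZeroIsoSource.inv ≫= hg (kernelZeroIsoSource.hom ≫ ψ)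

namespace IsTorsionPair

variable {T F : Set C}

lemma mem_torsion_of_forall_hom_eq_zero (h : IsTorsionPair T F) {K : C}
    (hK : ∀ F' ∈ F, ∀ ψ : K ⟶ F', ψ = 0) : K ∈ T := by
  obtain ⟨T', F', hT', hF', i, p, w, hS⟩ := h.exists_ses K
  have : Epi (0 : K ⟶ F') := hK F' hF' p ▸ hS.epi_g
  have : IsIso i := hS.isIso_f_iff.2 (IsZero.of_epi_zero K F')
  exact h.isoClosed_torsion (asIso i) hT'

lemma mem_free_of_forall_hom_eq_zero (h : IsTorsionPair T F) {K : C}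
    (hK : ∀ T' ∈ T, ∀ ψ : T' ⟶ K, ψ = 0) : K ∈ F := by
  obtain ⟨T', F', hT', hF', i, p, w, hS⟩ := h.exists_ses K
  have : Mono (0 : T' ⟶ K) := hK T' hT' i ▸ hS.mono_f
  have : IsIso p := hS.isIso_g_iff.2 (IsZero.of_mono_zero T' K)
  exact h.isoClosed_free (asIso p).symm hF'

lemma defl_torsion_iff (h : IsTorsionPair T F) {X Y : C} (f : X ⟶ Y) :
    Defl T f ↔ (Epi f ∧ ∀ {Z W : C} (g : Z ⟶ W), Defl F g → EpiPerp f g) :=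
  ⟨fun hf => ⟨hf.1, fun _ hg φ => h.hom_zero hf.2 hg.2 φ⟩, fun ⟨hf, hperp⟩ =>
    ⟨hf, h.mem_torsion_of_forall_hom_eq_zero fun _ hF' =>
      (hperp _ (defl_zero_of_mem h.isoClosed_free hF')).eq_zero_of_zero_right⟩⟩

lemma defl_free_iff (h : IsTorsionPair T F) {Z W : C} (g : Z ⟶ W) :
    Defl F g ↔ (Epi g ∧ ∀ {X Y : C} (f : X ⟶ Y), Defl T f → EpiPerp f g) :=
  ⟨fun hg => ⟨hg.1, fun _ hf φ => h.hom_zero hf.2 hg.2 φ⟩, fun ⟨hg, hperp⟩ =>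
    ⟨hg, h.mem_free_of_forall_hom_eq_zero fun _ hT' =>
      (hperp _ (defl_zero_of_mem h.isoClosed_torsion hT')).eq_zero_of_zero_left⟩⟩

lemma exists_defl_factorization (h : IsTorsionPair T F) {X Y : C} (f : X ⟶ Y) [Epi f] :
    ∃ (K : C) (l : X ⟶ K) (r : K ⟶ Y), Defl T l ∧ Defl F r ∧ l ≫ r = f := by
  obtain ⟨T', F', hT', hF', i, p, w, hS⟩ := h.exists_ses (kernel f)
  have := hS.mono_f
  have := hS.epi_g
  let m := i ≫ kernel.ι f
  have hmf : m ≫ f = 0 := by simp [m]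
  let l := cokernel.π m
  let r := cokernel.desc m f hmf
  have hlr : l ≫ r = f := cokernel.π_desc m f hmf
  have : Epi r := epi_of_epi_fac hlr
  let eT : T' ≅ kernel l := IsLimit.conePointUniqueUpToIso
    (Abelian.monoIsKernelOfCokernel _ (cokernelIsCokernel m)) (limit.isLimit _)
  have heT : eT.hom ≫ kernel.ι l = m :=
    IsLimit.conePointUniqueUpToIso_hom_comp _ _ WalkingParallelPair.zero
  have hS' := shortExact_kernelMap_of_epi hlr
  have := hS'.epi_g
  have hi : i = eT.hom ≫ kernel.map l f (𝟙 X) r (by simp [← hlr]) := by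
    rw [← cancel_mono (kernel.ι f)]
    simp [heT, m]
  let eF : F' ≅ kernel r := IsColimit.coconePointUniqueUpToIso hS.exact.gIsCokernel
    (isCokernelEpiComp hS'.exact.gIsCokernel eT.hom hi)
  exact ⟨_, l, r, ⟨inferInstance, h.isoClosed_torsion eT hT'⟩,
    ⟨inferInstance, h.isoClosed_free eF hF'⟩, hlr⟩

end IsTorsionPair

/-- if `(T, F)` is a torsion pair in an abelian category `C`, then
`(Defl T, Defl F)` is an epimorphism factorization system in `C`. -/
theorem torsionPair_defl_isEpiFactorizationSystem
    (T F : Set C) (h : IsTorsionPair T F) :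
    IsEpiFactorizationSystem (Defl T) (Defl F) :=
  ⟨fun _ hf => hf.1, fun _ hg => hg.1, fun f _ => h.exists_defl_factorization f,
    h.defl_torsion_iff, h.defl_free_iff⟩

end TorsionFS
end

section
/- Let C be an abelian category and let (L, R) be an epimorphism factorization system in C. Then (Ker L, Ker R) is a torsion pair in C. -/
open CategoryTheory CategoryTheory.Limits

namespace TorsionFS

variable {C : Type*} [Category C] [Abelian C]

/-- if `(L, R)` is an epimorphism factorization system in an abelian
category `C`, then `(Ker L, Ker R)` is a torsion pair in `C`. -/
theorem epiFactorizationSystem_ker_isTorsionPair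
    (L R : MorphismProperty C) (h : IsEpiFactorizationSystem L R) :
    IsTorsionPair (KerClass L) (KerClass R) := by
  constructor
  · rintro X Y e ⟨A, B, f, hf, ⟨i⟩⟩
    exact ⟨A, B, f, hf, ⟨e.symm.trans i⟩⟩
  · rintro X Y e ⟨A, B, f, hf, ⟨i⟩⟩
    exact ⟨A, B, f, hf, ⟨e.symm.trans i⟩⟩
  · rintro X Y ⟨A, B, f, hf, ⟨i⟩⟩ ⟨A', B', g, hg, ⟨j⟩⟩ φ
    have hperp := ((h.left_eq f).mp hf).2 g hg
    have h0 : i.inv ≫ φ ≫ j.hom = 0 := hperp _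
    calc φ = i.hom ≫ (i.inv ≫ φ ≫ j.hom) ≫ j.inv := by simp
    _ = 0 := by rw [h0]; simp
  · intro X
    obtain ⟨Z, hZ⟩ := HasZeroObject.zero (C := C)
    have hepi : Epi (0 : X ⟶ Z) := ⟨fun g h' _ => hZ.eq_of_src g h'⟩
    obtain ⟨K, l, r, hl, hr, hcomp⟩ := h.factor (0 : X ⟶ Z) hepi
    have hr0 : r = 0 := hZ.eq_of_tgt r 0
    refine ⟨kernel l, K, ⟨X, K, l, hl, ⟨Iso.refl _⟩⟩,
      ⟨K, Z, r, hr, ⟨((kernelIsoOfEq hr0).trans kernelZeroIsoSource).symm⟩⟩,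
      kernel.ι l, l, kernel.condition l, ?_⟩
    exact { exact := ShortComplex.exact_of_f_is_kernel _ (kernelIsKernel l),
            mono_f := inferInstance,
            epi_g := h.epi_of_L l hl }

end TorsionFS
end

section
/- Let C be an abelian category. The assignments (T, F) ↦ (Defl T, Defl F) and (L, R) ↦ (Ker L, Ker R) are mutually inverse: for every torsion pair (T, F) in C one has Ker(Defl T) = T and Ker(Defl F) = F, and for every epimorphism factorization system (L, R) in C one has Defl(Ker L) = L and Defl(Ker R) = R. -/
open CategoryTheory CategoryTheory.Limits

namespace TorsionFS

variable {C : Type*} [Category C] [Abelian C]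

open ZeroObject in
lemma kerClass_eq_of_isoClosed (U : Set C)
    (hU : ∀ {X Y : C}, (X ≅ Y) → X ∈ U → Y ∈ U) :
    KerClass (Defl U) = U := by
  ext Z
  constructor
  · rintro ⟨X, Y, f, ⟨hf, hker⟩, ⟨e⟩⟩
    exact hU e.symm hker
  · intro hZ
    refine ⟨Z, 0, 0, ⟨⟨?_⟩, hU kernelZeroIsoSource.symm hZ⟩, ⟨kernelZeroIsoSource.symm⟩⟩
    intro W g h hgh
    apply (isZero_zero C).eq_of_src

lemma mem_of_perp (L R : MorphismProperty C) (h : IsEpiFactorizationSystem L R) :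
    Defl (KerClass L) = L := by
  ext X Y f
  constructor
  · rintro ⟨hf, A, B, l, hl, ⟨e⟩⟩
    refine (h.left_eq f).2 ⟨hf, fun g hg φ => ?_⟩
    have h0 : e.inv ≫ φ = 0 := ((h.left_eq l).1 hl).2 g hg (e.inv ≫ φ)
    rw [← Iso.hom_inv_id_assoc e φ, h0, comp_zero]
  · intro hf
    exact ⟨h.epi_of_L f hf, X, Y, f, hf, ⟨Iso.refl _⟩⟩

lemma mem_of_perp' (L R : MorphismProperty C) (h : IsEpiFactorizationSystem L R) :
    Defl (KerClass R) = R := by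
  ext Z W g
  constructor
  · rintro ⟨hg, A, B, r, hr, ⟨e⟩⟩
    refine (h.right_eq g).2 ⟨hg, fun f hf φ => ?_⟩
    have h0 : φ ≫ e.hom = 0 := ((h.right_eq r).1 hr).2 f hf (φ ≫ e.hom)
    have := congrArg (· ≫ e.inv) h0
    simpa using this
  · intro hg
    exact ⟨h.epi_of_R g hg, Z, W, g, hg, ⟨Iso.refl _⟩⟩

/-- the assignments `(T, F) ↦ (Defl T, Defl F)` and
`(L, R) ↦ (Ker L, Ker R)` are mutually inverse. -/
theorem torsionPair_epiFactorizationSystem_bijection :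
    (∀ T F : Set C, IsTorsionPair T F →
      KerClass (Defl T) = T ∧ KerClass (Defl F) = F) ∧
    (∀ L R : MorphismProperty C, IsEpiFactorizationSystem L R →
      Defl (KerClass L) = L ∧ Defl (KerClass R) = R) := by
  constructor
  · intro T F hTF
    exact ⟨kerClass_eq_of_isoClosed T (fun e h => hTF.isoClosed_torsion e h),
           kerClass_eq_of_isoClosed F (fun e h => hTF.isoClosed_free e h)⟩
  · intro L R h
    exact ⟨mem_of_perp L R h, mem_of_perp' L R h⟩


end TorsionFS
end

section
/- Let C be a triangulated category and let (T, F) be a t-structure in C. Then (Infl T, Infl F) is an inflation factorization system in C. -/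
open CategoryTheory CategoryTheory.Limits CategoryTheory.Pretriangulated

namespace TriangFS

variable {C : Type*} [Category C] [Preadditive C] [HasZeroObject C]
  [HasShift C ℤ] [∀ n : ℤ, (shiftFunctor C n).Additive]
  [Pretriangulated C] [IsTriangulated C]

/-- `Z` is a cone of `f : X ⟶ Y` if it fits in a distinguished triangle
`X ⟶ Y ⟶ Z ⟶ X⟦1⟧`. -/
def IsConeOf {X Y : C} (f : X ⟶ Y) (Z : C) : Prop :=
  ∃ (g : Y ⟶ Z) (h : Z ⟶ X⟦(1 : ℤ)⟧), Triangle.mk f g h ∈ distTriang C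

/-- `l ⊥ r` iff `Hom(C_l, C_r) = 0` and `Hom(C_l, C_r⟦-1⟧) = 0` for cones
`C_l` of `l` and `C_r` of `r`. -/
def ConePerp {X Y Z W : C} (l : X ⟶ Y) (r : Z ⟶ W) : Prop :=
  ∀ (Cl Cr : C), IsConeOf l Cl → IsConeOf r Cr →
    (∀ φ : Cl ⟶ Cr, φ = 0) ∧ (∀ φ : Cl ⟶ Cr⟦(-1 : ℤ)⟧, φ = 0)

/-- `Infl U`: morphisms admitting a cone in `U`. -/
def Infl (U : Set C) : MorphismProperty C :=
  fun _ _ f => ∃ Z ∈ U, IsConeOf f Z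

/-- `Cone L`: objects isomorphic to a cone of some morphism in `L`. -/
def ConeClass (L : MorphismProperty C) : Set C :=
  {Z | ∃ (X Y : C) (f : X ⟶ Y), L f ∧ IsConeOf f Z}

/-- A `t`-structure `(U, V)` in a triangulated category. -/
structure IsTStructure (U V : Set C) : Prop where
  isoClosed_left : ∀ {X Y : C}, (X ≅ Y) → X ∈ U → Y ∈ U
  isoClosed_right : ∀ {X Y : C}, (X ≅ Y) → X ∈ V → Y ∈ V
  exists_triangle : ∀ X : C, ∃ (U' V' : C) (_ : U' ∈ U) (_ : V' ∈ V)
      (f : U' ⟶ X) (g : X ⟶ V') (h : V' ⟶ U'⟦(1 : ℤ)⟧),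
      Triangle.mk f g h ∈ distTriang C
  hom_zero : ∀ {X Y : C}, X ∈ U → Y ∈ V → ∀ f : X ⟶ Y, f = 0
  shift_mem : ∀ {X : C}, X ∈ U → X⟦(1 : ℤ)⟧ ∈ U

/-- An inflation factorization system `(L, R)` in a triangulated category. -/
structure IsInflFactorizationSystem (L R : MorphismProperty C) : Prop where
  factor : ∀ {X Y : C} (f : X ⟶ Y),
    ∃ (K : C) (l : X ⟶ K) (r : K ⟶ Y), L l ∧ R r ∧ l ≫ r = f
  left_eq : ∀ {X Y : C} (f : X ⟶ Y),
    L f ↔ ∀ {Z W : C} (g : Z ⟶ W), R g → ConePerp f g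
  right_eq : ∀ {Z W : C} (g : Z ⟶ W),
    R g ↔ ∀ {X Y : C} (f : X ⟶ Y), L f → ConePerp f g

end TriangFS

/-!
The cone of a morphism is determined up to isomorphism, so `Infl T ⊥ Infl F` is
`Hom(T, F) = 0 = Hom(T, F⟦-1⟧)`, both of which hold for a t-structure. Conversely, the
morphism `0 ⟶ V` has cone `V`, so a morphism left orthogonal to `Infl F` has a cone `Cf` with
`Hom(Cf, F) = 0`; the truncation triangle `U ⟶ Cf ⟶ V` then has `V = 0`, so `Cf ≅ U ∈ T`.
Dually for right orthogonality. To factor `f`, truncate its cone `U ⟶ Cf ⟶ V`, let `r` be the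
fibre of the composite `Y ⟶ Cf ⟶ V`; the octahedron axiom factors `f` through `r` by a
morphism whose cone is `U`.
-/

namespace TriangFS

open ZeroObject

variable {C : Type*} [Category C] [Preadditive C] [HasZeroObject C]
  [HasShift C ℤ] [∀ n : ℤ, (shiftFunctor C n).Additive] [Pretriangulated C]

theorem IsConeOf.nonempty_iso {X Y : C} {f : X ⟶ Y} {Z W : C} (hZ : IsConeOf f Z)
    (hW : IsConeOf f W) : Nonempty (Z ≅ W) := by
  obtain ⟨g, δ, hT⟩ := hZ
  obtain ⟨g', δ', hT'⟩ := hW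
  exact ⟨Triangle.π₃.mapIso (isoTriangleOfIso₁₂ _ _ hT hT' (Iso.refl _) (Iso.refl _)
    ((Category.comp_id _).trans (Category.id_comp _).symm))⟩

theorem isConeOf_zero (X : C) : IsConeOf (0 : (0 : C) ⟶ X) X :=
  ⟨𝟙 X, 0, contractible_distinguished₁ X⟩

theorem Infl.mem_of_isConeOf {U : Set C} (hU : ∀ {X Y : C}, (X ≅ Y) → X ∈ U → Y ∈ U)
    {X Y : C} {f : X ⟶ Y} (hf : Infl U f) {Z : C} (hZ : IsConeOf f Z) : Z ∈ U := by
  obtain ⟨Z', hZ', hcone⟩ := hf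
  obtain ⟨e⟩ := hcone.nonempty_iso hZ
  exact hU e hZ'

namespace IsTStructure

variable {T F : Set C} (h : IsTStructure T F)
include h

theorem hom_shift_neg_one_eq_zero {A B : C} (hA : A ∈ T) (hB : B ∈ F)
    (φ : A ⟶ B⟦(-1 : ℤ)⟧) : φ = 0 := by
  let e := (shiftFunctorCompIsoId C (-1 : ℤ) (1 : ℤ) (by norm_num)).app B
  have hφ : φ⟦(1 : ℤ)⟧' ≫ e.hom = 0 := h.hom_zero (h.shift_mem hA) hB _
  apply (shiftFunctor C (1 : ℤ)).map_injective
  rw [Functor.map_zero, ← cancel_mono e.hom, hφ, zero_comp]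

theorem conePerp_of_infl {X Y Z W : C} {f : X ⟶ Y} {g : Z ⟶ W} (hf : Infl T f)
    (hg : Infl F g) : ConePerp f g := fun _ _ hCf hCg =>
  have hCf' := hf.mem_of_isConeOf h.isoClosed_left hCf
  have hCg' := hg.mem_of_isConeOf h.isoClosed_right hCg
  ⟨h.hom_zero hCf' hCg', h.hom_shift_neg_one_eq_zero hCf' hCg'⟩

theorem mem_left_of_forall_hom_eq_zero {X : C}
    (hX : ∀ V ∈ F, ∀ φ : X ⟶ V, φ = 0) : X ∈ T := by
  obtain ⟨U, V, hU, hV, u, v, w, hT⟩ := h.exists_triangle X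
  obtain ⟨ρ, hρ⟩ := Triangle.yoneda_exact₃ _ hT (𝟙 V)
    ((Category.comp_id v).trans (hX V hV v))
  have hρ₀ : ρ = 0 := h.hom_zero (h.shift_mem hU) hV ρ
  have hV₀ : IsZero V := by
    rw [IsZero.iff_id_eq_zero, hρ, hρ₀, comp_zero]
    rfl
  have : IsIso u := (Triangle.isZero₃_iff_isIso₁ _ hT).1 hV₀
  exact h.isoClosed_left (asIso u) hU

theorem mem_right_of_forall_hom_eq_zero {X : C}
    (hX : ∀ U ∈ T, ∀ φ : U ⟶ X, φ = 0) : X ∈ F := by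
  obtain ⟨U, V, hU, hV, u, v, w, hT⟩ := h.exists_triangle X
  obtain ⟨ψ, hψ⟩ := Triangle.coyoneda_exact₂ _ (inv_rot_of_distTriang _ hT) (𝟙 U)
    ((Category.id_comp u).trans (hX U hU u))
  have hψ₀ : ψ = 0 := h.hom_shift_neg_one_eq_zero hU hV ψ
  have hU₀ : IsZero U := by
    rw [IsZero.iff_id_eq_zero, hψ, hψ₀, zero_comp]
    rfl
  have : IsIso v := (Triangle.isZero₁_iff_isIso₂ _ hT).1 hU₀
  exact h.isoClosed_right (asIso v).symm hV

theorem infl_left_of_forall_conePerp {X Y : C} {f : X ⟶ Y}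
    (hf : ∀ {Z W : C} (g : Z ⟶ W), Infl F g → ConePerp f g) : Infl T f := by
  obtain ⟨Cf, g, δ, hT⟩ := distinguished_cocone_triangle f
  refine ⟨Cf, h.mem_left_of_forall_hom_eq_zero fun V hV => ?_, g, δ, hT⟩
  exact (hf _ ⟨V, hV, isConeOf_zero V⟩ Cf V ⟨g, δ, hT⟩ (isConeOf_zero V)).1

theorem infl_right_of_forall_conePerp {Z W : C} {g : Z ⟶ W}
    (hg : ∀ {X Y : C} (f : X ⟶ Y), Infl T f → ConePerp f g) : Infl F g := by
  obtain ⟨Cg, k, δ, hT⟩ := distinguished_cocone_triangle g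
  refine ⟨Cg, h.mem_right_of_forall_hom_eq_zero fun U hU => ?_, k, δ, hT⟩
  exact (hg _ ⟨U, hU, isConeOf_zero U⟩ U Cg (isConeOf_zero U) ⟨k, δ, hT⟩).1

end IsTStructure

variable [IsTriangulated C]

theorem exists_factorization_of_distTriang_cone {X Y Cf : C} {f : X ⟶ Y} {g : Y ⟶ Cf}
    {δ : Cf ⟶ X⟦(1 : ℤ)⟧} (hf : Triangle.mk f g δ ∈ distTriang C) {U V : C} {u : U ⟶ Cf}
    {v : Cf ⟶ V} {w : V ⟶ U⟦(1 : ℤ)⟧} (hUV : Triangle.mk u v w ∈ distTriang C) :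
    ∃ (K : C) (l : X ⟶ K) (r : K ⟶ Y), IsConeOf l U ∧ IsConeOf r V ∧ l ≫ r = f := by
  obtain ⟨K, r, t, hr⟩ := distinguished_cocone_triangle₁ (g ≫ v)
  let O := Triangulated.someOctahedron' rfl hf hUV hr
  exact ⟨K, O.m₁, r, ⟨_, _, O.mem⟩, ⟨_, _, hr⟩, O.comm₁⟩

theorem IsTStructure.exists_factorization {T F : Set C} (h : IsTStructure T F) {X Y : C}
    (f : X ⟶ Y) : ∃ (K : C) (l : X ⟶ K) (r : K ⟶ Y), Infl T l ∧ Infl F r ∧ l ≫ r = f := by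
  obtain ⟨Cf, g, δ, hf⟩ := distinguished_cocone_triangle f
  obtain ⟨U, V, hU, hV, u, v, w, hUV⟩ := h.exists_triangle Cf
  obtain ⟨K, l, r, hl, hr, hlr⟩ := exists_factorization_of_distTriang_cone hf hUV
  exact ⟨K, l, r, ⟨U, hU, hl⟩, ⟨V, hV, hr⟩, hlr⟩

/-- if `(T, F)` is a `t`-structure in a triangulated category `C`,
then `(Infl T, Infl F)` is an inflation factorization system in `C`. -/
theorem tStructure_infl_isInflFactorizationSystem
    (T F : Set C) (h : IsTStructure T F) :
    IsInflFactorizationSystem (Infl T) (Infl F) := by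
  refine ⟨h.exists_factorization, fun _ => ⟨?_, h.infl_left_of_forall_conePerp⟩,
    fun _ => ⟨?_, h.infl_right_of_forall_conePerp⟩⟩
  · exact fun hf _ _ _ hg => h.conePerp_of_infl hf hg
  · exact fun hg _ _ _ hf => h.conePerp_of_infl hf hg

end TriangFS
end

section
/- Let C be a triangulated category and let (L, R) be an inflation factorization system in C. Then (Cone L, Cone R) is a t-structure in C. -/
/-!
Factoring `0 ⟶ X` as `r ∘ l` with `l ∈ L`, `r ∈ R` gives a distinguished triangle
`K ⟶ X ⟶ C_r ⟶ K⟦1⟧` in which `K`, the target of `l`, is also its cone. Orthogonality of `L` and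
`R` gives `Hom(Cone L, Cone R) = 0` and `Hom((Cone L)⟦1⟧, Cone R) = 0`. The second vanishing shows
that every `Y` with `Hom(Y, Cone R) = 0` lies in `Cone L`: in its triangle `K ⟶ Y ⟶ V ⟶ K⟦1⟧` the
map `Y ⟶ V` is zero, so `𝟙 V` factors through `K⟦1⟧ ⟶ V`, hence `V = 0` and `Y ≅ K`. Applied to
`Y = U⟦1⟧` with `U ∈ Cone L`, this gives closure of `Cone L` under the shift.
-/

open CategoryTheory CategoryTheory.Limits CategoryTheory.Pretriangulated

namespace TriangFS

variable {C : Type*} [Category C] [Preadditive C] [HasZeroObject C]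
  [HasShift C ℤ] [∀ n : ℤ, (shiftFunctor C n).Additive]
  [Pretriangulated C] [IsTriangulated C]

open ZeroObject

section

omit [IsTriangulated C]

lemma IsConeOf.of_iso {X Y Z Z' : C} {f : X ⟶ Y} (hZ : IsConeOf f Z) (e : Z ≅ Z') :
    IsConeOf f Z' := by
  obtain ⟨g, k, hT⟩ := hZ
  exact ⟨g ≫ e.hom, e.inv ≫ k, isomorphic_distinguished _ hT _
    (Triangle.isoMk _ _ (Iso.refl _) (Iso.refl _) e.symm
      (by simp [Triangle.mk]) (by simp [Triangle.mk]) (by simp [Triangle.mk]))⟩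

lemma isConeOf_target_of_from_zero {X : C} (f : (0 : C) ⟶ X) : IsConeOf f X := by
  obtain rfl : f = 0 := (isZero_zero C).eq_of_src f 0
  exact ⟨𝟙 X, 0, contractible_distinguished₁ X⟩

omit [HasZeroObject C] [Pretriangulated C] in
lemma shift_hom_eq_zero_of_hom_shift_eq_zero {A B : C}
    (h : ∀ φ : A ⟶ B⟦(-1 : ℤ)⟧, φ = 0) (ψ : A⟦(1 : ℤ)⟧ ⟶ B) : ψ = 0 :=
  have : (shiftEquiv C (1 : ℤ)).functor.Additive := inferInstanceAs (shiftFunctor C 1).Additive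
  ((shiftEquiv C (1 : ℤ)).toAdjunction.homAddEquiv A B).map_eq_zero_iff.mp (h _)

lemma ConePerp.hom_eq_zero {X Y Z W U V : C} {l : X ⟶ Y} {r : Z ⟶ W} (hlr : ConePerp l r)
    (hU : IsConeOf l U) (hV : IsConeOf r V) (φ : U ⟶ V) : φ = 0 :=
  (hlr U V hU hV).1 φ

lemma ConePerp.shift_hom_eq_zero {X Y Z W U V : C} {l : X ⟶ Y} {r : Z ⟶ W}
    (hlr : ConePerp l r) (hU : IsConeOf l U) (hV : IsConeOf r V) (φ : U⟦(1 : ℤ)⟧ ⟶ V) :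
    φ = 0 :=
  shift_hom_eq_zero_of_hom_shift_eq_zero (hlr U V hU hV).2 φ

lemma mem_coneClass_of_iso (L : MorphismProperty C) {Z Z' : C} (e : Z ≅ Z')
    (hZ : Z ∈ ConeClass L) : Z' ∈ ConeClass L := by
  obtain ⟨X, Y, f, hf, hZ⟩ := hZ
  exact ⟨X, Y, f, hf, hZ.of_iso e⟩

namespace IsInflFactorizationSystem

variable {L R : MorphismProperty C}

lemma hom_eq_zero (h : IsInflFactorizationSystem L R) {U V : C} (hU : U ∈ ConeClass L)
    (hV : V ∈ ConeClass R) (φ : U ⟶ V) : φ = 0 := by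
  obtain ⟨_, _, l, hl, hU⟩ := hU
  obtain ⟨_, _, r, hr, hV⟩ := hV
  exact ((h.left_eq l).mp hl r hr).hom_eq_zero hU hV φ

lemma shift_hom_eq_zero (h : IsInflFactorizationSystem L R) {U V : C} (hU : U ∈ ConeClass L)
    (hV : V ∈ ConeClass R) (φ : U⟦(1 : ℤ)⟧ ⟶ V) : φ = 0 := by
  obtain ⟨_, _, l, hl, hU⟩ := hU
  obtain ⟨_, _, r, hr, hV⟩ := hV
  exact ((h.left_eq l).mp hl r hr).shift_hom_eq_zero hU hV φ

lemma exists_distTriang (h : IsInflFactorizationSystem L R) (X : C) :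
    ∃ (U V : C) (_ : U ∈ ConeClass L) (_ : V ∈ ConeClass R)
      (f : U ⟶ X) (g : X ⟶ V) (k : V ⟶ U⟦(1 : ℤ)⟧), Triangle.mk f g k ∈ distTriang C := by
  obtain ⟨U, l, r, hl, hr, -⟩ := h.factor (0 : (0 : C) ⟶ X)
  obtain ⟨V, g, k, hT⟩ := distinguished_cocone_triangle r
  exact ⟨U, V, ⟨_, _, l, hl, isConeOf_target_of_from_zero l⟩, ⟨U, X, r, hr, g, k, hT⟩, r, g, k, hT⟩

lemma mem_coneClass_of_forall_hom_eq_zero (h : IsInflFactorizationSystem L R) {Y : C}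
    (hY : ∀ V ∈ ConeClass R, ∀ φ : Y ⟶ V, φ = 0) : Y ∈ ConeClass L := by
  obtain ⟨U, V, hU, hV, f, g, k, hT⟩ := h.exists_distTriang Y
  obtain ⟨ρ, hρ⟩ := Triangle.yoneda_exact₃ _ hT (𝟙 V) ((hY V hV g).symm ▸ zero_comp)
  have hV_zero : IsZero V := (IsZero.iff_id_eq_zero V).mpr <| by
    rw [hρ, h.shift_hom_eq_zero hU hV ρ]
    exact comp_zero
  have : IsIso f := (Triangle.isZero₃_iff_isIso₁ _ hT).mp hV_zero
  exact mem_coneClass_of_iso L (asIso f) hU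

lemma shift_mem_coneClass (h : IsInflFactorizationSystem L R) {U : C}
    (hU : U ∈ ConeClass L) : U⟦(1 : ℤ)⟧ ∈ ConeClass L :=
  h.mem_coneClass_of_forall_hom_eq_zero fun _ hV φ => h.shift_hom_eq_zero hU hV φ

end IsInflFactorizationSystem

end

/-- if `(L, R)` is an inflation factorization system in a
triangulated category `C`, then `(Cone L, Cone R)` is a `t`-structure in `C`. -/
theorem inflFactorizationSystem_cone_isTStructure
    (L R : MorphismProperty C) (h : IsInflFactorizationSystem L R) :
    IsTStructure (ConeClass L) (ConeClass R) :=
  { isoClosed_left := mem_coneClass_of_iso L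
    isoClosed_right := mem_coneClass_of_iso R
    exists_triangle := h.exists_distTriang
    hom_zero := h.hom_eq_zero
    shift_mem := h.shift_mem_coneClass }

end TriangFS
end

section
/- Let C be a triangulated category and let (L, R) be a deflation factorization system in C. Then (Cocone L, Cocone R) is a t-structure in C. -/
open CategoryTheory CategoryTheory.Limits CategoryTheory.Pretriangulated

namespace TriangFS

variable {C : Type*} [Category C] [Preadditive C] [HasZeroObject C]
  [HasShift C ℤ] [∀ n : ℤ, (shiftFunctor C n).Additive]
  [Pretriangulated C] [IsTriangulated C]

/-- `K` is a cocone of `f : X ⟶ Y` if it fits in a distinguished triangle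
`K ⟶ X ⟶ Y ⟶ K⟦1⟧`. -/
def IsCoconeOf {X Y : C} (f : X ⟶ Y) (K : C) : Prop :=
  ∃ (g : K ⟶ X) (h : Y ⟶ K⟦(1 : ℤ)⟧), Triangle.mk g f h ∈ distTriang C

/-- `l ⊥ r` iff `Hom(K_l, K_r) = 0` and `Hom(K_l, K_r⟦-1⟧) = 0` for cocones
`K_l` of `l` and `K_r` of `r`. -/
def CoconePerp {X Y Z W : C} (l : X ⟶ Y) (r : Z ⟶ W) : Prop :=
  ∀ (Kl Kr : C), IsCoconeOf l Kl → IsCoconeOf r Kr →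
    (∀ φ : Kl ⟶ Kr, φ = 0) ∧ (∀ φ : Kl ⟶ Kr⟦(-1 : ℤ)⟧, φ = 0)

/-- `Defl U`: morphisms admitting a cocone in `U`. -/
def Defl (U : Set C) : MorphismProperty C :=
  fun _ _ f => ∃ K ∈ U, IsCoconeOf f K

/-- `Cocone L`: objects isomorphic to a cocone of some morphism in `L`. -/
def CoconeClass (L : MorphismProperty C) : Set C :=
  {K | ∃ (X Y : C) (f : X ⟶ Y), L f ∧ IsCoconeOf f K}

/-- A deflation factorization system `(L, R)` in a triangulated category. -/
structure IsDeflFactorizationSystem (L R : MorphismProperty C) : Prop where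
  factor : ∀ {X Y : C} (f : X ⟶ Y),
    ∃ (K : C) (l : X ⟶ K) (r : K ⟶ Y), L l ∧ R r ∧ l ≫ r = f
  left_eq : ∀ {X Y : C} (f : X ⟶ Y),
    L f ↔ ∀ {Z W : C} (g : Z ⟶ W), R g → CoconePerp f g
  right_eq : ∀ {Z W : C} (g : Z ⟶ W),
    R g ↔ ∀ {X Y : C} (f : X ⟶ Y), L f → CoconePerp f g

end TriangFS

/-! For a deflation factorization system, `Cocone L` and `Cocone R` determine each other by
orthogonality: `A ∈ Cocone L` iff `Hom(A, B) = Hom(A, B⟦-1⟧) = 0` for every `B ∈ Cocone R`, and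
dually, because every object is a cocone of its map to `0`. Factoring `X ⟶ 0` as `X ⟶ M ⟶ 0`
with `M ∈ Cocone R` gives the truncation triangle `K ⟶ X ⟶ M ⟶ K⟦1⟧` with `K ∈ Cocone L`.
In the truncation triangle of `Y⟦-1⟧` for `Y ∈ Cocone R` the first map vanishes, which shows that
`Cocone R` is closed under `⟦-1⟧`; by orthogonality `Cocone L` is then closed under `⟦1⟧`. -/

open ZeroObject

namespace CategoryTheory

variable {C : Type*} [Category C] [HasZeroMorphisms C] {A B A' B' : C}

lemma forall_eq_zero_congr (e : (A ⟶ B) ≃ (A' ⟶ B')) (he : e 0 = 0) :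
    (∀ φ : A ⟶ B, φ = 0) ↔ ∀ φ : A' ⟶ B', φ = 0 :=
  ⟨fun h φ => by rw [← e.apply_symm_apply φ, h (e.symm φ), he],
    fun h φ => e.injective (by rw [h (e φ), he])⟩

lemma forall_eq_zero_iff_of_iso (eA : A ≅ A') (eB : B ≅ B') :
    (∀ φ : A ⟶ B, φ = 0) ↔ ∀ φ : A' ⟶ B', φ = 0 :=
  forall_eq_zero_congr (eA.homCongr eB) (by simp [Iso.homCongr_apply])

variable [HasShift C ℤ]

lemma forall_shift_one_hom_eq_zero_iff :
    (∀ φ : A⟦(1 : ℤ)⟧ ⟶ B, φ = 0) ↔ ∀ φ : A ⟶ B⟦(-1 : ℤ)⟧, φ = 0 := by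
  have he : (shiftEquiv C (1 : ℤ)).toAdjunction.homEquiv A B 0 = 0 := by
    simp [Adjunction.homEquiv_unit]
  exact forall_eq_zero_congr _ he

end CategoryTheory

namespace TriangFS

variable {C : Type*} [Category C] [Preadditive C] [HasZeroObject C]
  [HasShift C ℤ] [∀ n : ℤ, (shiftFunctor C n).Additive] [Pretriangulated C]

section Cocones

variable {X Y K K' : C} {f : X ⟶ Y}

lemma IsCoconeOf.of_iso (hK : IsCoconeOf f K) (e : K ≅ K') : IsCoconeOf f K' := by
  obtain ⟨g, u, hT⟩ := hK
  refine ⟨e.inv ≫ g, u ≫ e.hom⟦(1 : ℤ)⟧', isomorphic_distinguished _ hT _ ?_⟩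
  exact Triangle.isoMk _ _ e.symm (Iso.refl X) (Iso.refl Y) (Category.comp_id _)
    ((Category.comp_id f).trans (Category.id_comp f).symm)
    -- `simp` does not see through the projections of `Triangle.mk` here
    (by change (u ≫ e.hom⟦(1 : ℤ)⟧') ≫ e.inv⟦(1 : ℤ)⟧' = 𝟙 Y ≫ u; simp [← Functor.map_comp])

lemma exists_isCoconeOf (f : X ⟶ Y) : ∃ K, IsCoconeOf f K := by
  obtain ⟨Z, g, u, hT⟩ := distinguished_cocone_triangle f
  exact ⟨_, _, _, inv_rot_of_distTriang _ hT⟩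

lemma IsCoconeOf.nonempty_iso (hK : IsCoconeOf f K) (hK' : IsCoconeOf f K') :
    Nonempty (K ≅ K') := by
  obtain ⟨g, u, hT⟩ := hK
  obtain ⟨g', u', hT'⟩ := hK'
  let e := isoTriangleOfIso₁₂ _ _ (rot_of_distTriang _ hT) (rot_of_distTriang _ hT')
    (Iso.refl X) (Iso.refl Y) ((Category.comp_id f).trans (Category.id_comp f).symm)
  exact ⟨(shiftFunctor C (1 : ℤ)).preimageIso (Triangle.π₃.mapIso e)⟩

lemma isCoconeOf_of_isZero (f : X ⟶ Y) (hY : IsZero Y) : IsCoconeOf f X := by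
  obtain ⟨K, g, u, hT⟩ := exists_isCoconeOf f
  have : IsIso g := (Triangle.isZero₃_iff_isIso₁ _ hT).1 hY
  exact IsCoconeOf.of_iso ⟨g, u, hT⟩ (asIso g)

lemma mem_coconeClass_of_iso {L : MorphismProperty C} (hK : K ∈ CoconeClass L) (e : K ≅ K') :
    K' ∈ CoconeClass L :=
  let ⟨_, _, f, hf, hfK⟩ := hK
  ⟨_, _, f, hf, hfK.of_iso e⟩

end Cocones

namespace IsDeflFactorizationSystem

variable {L R : MorphismProperty C}

lemma perp_of_mem_coconeClass (h : IsDeflFactorizationSystem L R) {A B : C}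
    (hA : A ∈ CoconeClass L) (hB : B ∈ CoconeClass R) :
    (∀ φ : A ⟶ B, φ = 0) ∧ (∀ φ : A ⟶ B⟦(-1 : ℤ)⟧, φ = 0) := by
  obtain ⟨_, _, l, hl, hAl⟩ := hA
  obtain ⟨_, _, r, hr, hBr⟩ := hB
  exact (h.left_eq l).1 hl r hr A B hAl hBr

lemma mem_coconeClass_left_of_perp (h : IsDeflFactorizationSystem L R) {A : C}
    (hA : ∀ B ∈ CoconeClass R, (∀ φ : A ⟶ B, φ = 0) ∧ (∀ φ : A ⟶ B⟦(-1 : ℤ)⟧, φ = 0)) :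
    A ∈ CoconeClass L := by
  have hA₀ : IsCoconeOf (0 : A ⟶ 0) A := isCoconeOf_of_isZero _ (isZero_zero C)
  refine ⟨A, 0, 0, (h.left_eq _).2 fun r hr K₁ K₂ hK₁ hK₂ => ?_, hA₀⟩
  obtain ⟨e⟩ := hK₁.nonempty_iso hA₀
  obtain ⟨h₀, h₁⟩ := hA K₂ ⟨_, _, r, hr, hK₂⟩
  exact ⟨(forall_eq_zero_iff_of_iso e.symm (Iso.refl _)).1 h₀,
    (forall_eq_zero_iff_of_iso e.symm (Iso.refl _)).1 h₁⟩

lemma mem_coconeClass_right_of_perp (h : IsDeflFactorizationSystem L R) {B : C}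
    (hB : ∀ A ∈ CoconeClass L, (∀ φ : A ⟶ B, φ = 0) ∧ (∀ φ : A ⟶ B⟦(-1 : ℤ)⟧, φ = 0)) :
    B ∈ CoconeClass R := by
  have hB₀ : IsCoconeOf (0 : B ⟶ 0) B := isCoconeOf_of_isZero _ (isZero_zero C)
  refine ⟨B, 0, 0, (h.right_eq _).2 fun l hl K₁ K₂ hK₁ hK₂ => ?_, hB₀⟩
  obtain ⟨e⟩ := hK₂.nonempty_iso hB₀
  obtain ⟨h₀, h₁⟩ := hB K₁ ⟨_, _, l, hl, hK₁⟩
  exact ⟨(forall_eq_zero_iff_of_iso (Iso.refl _) e.symm).1 h₀,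
    (forall_eq_zero_iff_of_iso (Iso.refl _) ((shiftFunctor C (-1 : ℤ)).mapIso e.symm)).1 h₁⟩

lemma exists_distTriang_coconeClass (h : IsDeflFactorizationSystem L R) (X : C) :
    ∃ (U V : C) (_ : U ∈ CoconeClass L) (_ : V ∈ CoconeClass R)
      (f : U ⟶ X) (g : X ⟶ V) (k : V ⟶ U⟦(1 : ℤ)⟧), Triangle.mk f g k ∈ distTriang C := by
  obtain ⟨M, l, r, hl, hr, -⟩ := h.factor (0 : X ⟶ 0)
  obtain ⟨K, a, b, hT⟩ := exists_isCoconeOf l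
  exact ⟨K, M, ⟨_, _, l, hl, a, b, hT⟩, ⟨_, _, r, hr, isCoconeOf_of_isZero r (isZero_zero C)⟩,
    a, l, b, hT⟩

lemma shift_neg_one_mem_coconeClass_right (h : IsDeflFactorizationSystem L R) {Y : C}
    (hY : Y ∈ CoconeClass R) : Y⟦(-1 : ℤ)⟧ ∈ CoconeClass R := by
  obtain ⟨K, M, hK, hM, a, l, _, hT⟩ := h.exists_distTriang_coconeClass (Y⟦(-1 : ℤ)⟧)
  have ha : a = 0 := (h.perp_of_mem_coconeClass hK hY).2 a
  refine h.mem_coconeClass_right_of_perp fun A hA =>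
    ⟨(h.perp_of_mem_coconeClass hA hY).2, forall_shift_one_hom_eq_zero_iff.1 fun ψ => ?_⟩
  -- `ψ ≫ l` vanishes because `M ∈ CoconeClass R`, so `ψ` factors through `a = 0`.
  have hψ : ψ ≫ l = 0 :=
    forall_shift_one_hom_eq_zero_iff.2 (h.perp_of_mem_coconeClass hA hM).2 _
  obtain ⟨χ, rfl⟩ := Triangle.coyoneda_exact₂ _ hT ψ hψ
  exact (congrArg (χ ≫ ·) ha).trans comp_zero

lemma shift_one_mem_coconeClass_left (h : IsDeflFactorizationSystem L R) {X : C}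
    (hX : X ∈ CoconeClass L) : X⟦(1 : ℤ)⟧ ∈ CoconeClass L :=
  h.mem_coconeClass_left_of_perp fun _ hB =>
    ⟨forall_shift_one_hom_eq_zero_iff.2 (h.perp_of_mem_coconeClass hX hB).2,
      forall_shift_one_hom_eq_zero_iff.2
        (h.perp_of_mem_coconeClass hX (h.shift_neg_one_mem_coconeClass_right hB)).2⟩

end IsDeflFactorizationSystem

variable [IsTriangulated C]

/-- if `(L, R)` is a deflation factorization system in a
triangulated category `C`, then `(Cocone L, Cocone R)` is a `t`-structure in `C`. -/
theorem deflFactorizationSystem_cocone_isTStructure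
    (L R : MorphismProperty C) (h : IsDeflFactorizationSystem L R) :
    IsTStructure (CoconeClass L) (CoconeClass R) :=
  { isoClosed_left := fun e hK => mem_coconeClass_of_iso hK e
    isoClosed_right := fun e hK => mem_coconeClass_of_iso hK e
    exists_triangle := h.exists_distTriang_coconeClass
    hom_zero := fun hX hY => (h.perp_of_mem_coconeClass hX hY).1
    shift_mem := h.shift_one_mem_coconeClass_left }

end TriangFS
end

section
/- Let (A, B, C) be a recollement of abelian categories with functors i^*, i_*, i^!, j_!, j^*, j_*, and assume that i^* and i^! are exact. Let (T1, F1) and (T2, F2) be torsion pairs in A and C, respectively. Set T = {B ∈ B | i^*(B) ∈ T1 and j^*(B) ∈ T2} and F = {B ∈ B | i^!(B) ∈ F1 and j^*(B) ∈ F2}. Then (T, F) is a torsion pair in B. -/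
/-!
Given `X`, let `0 → TC → j^*X → FC → 0` be the torsion sequence of `j^*X`, `α : X → j_* FC` its
adjoint and `K = ker α`; let `0 → TA → i^*K → FA → 0` be the torsion sequence of `i^*K` and
`β : K ↠ i_* FA` its adjoint. The glued sequence is `0 → ker β → X → X / ker β → 0`.
Since `j^* i_* = 0` and `i^! j_* = 0`, the functor `j^*` does not see `K / ker β ≅ i_* FA` and
`i^!` does not see `X / K ⊆ j_* FC`; hence `j^*` sends the glued sequence to the torsion sequence
of `j^*X`, while `i^*(ker β) ≅ TA` by left exactness of `i^*` and `i^!(X / ker β) ≅ i^! i_* FA ≅ FA`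
by right exactness of `i^!`.
Orthogonality: a map `T → F` killed by `j^*` factors through `i_* i^! F ↪ F`, and the factorisation
is adjoint to a map `i^*T → i^!F`, which vanishes.
-/

open CategoryTheory CategoryTheory.Limits

namespace RecollementFS

/-- A recollement of abelian categories `(A, B, C)`. -/
structure AbelianRecollement (A B C : Type*) [Category A] [Category B] [Category C]
    [Abelian A] [Abelian B] [Abelian C] where
  /-- `i_* : A ⥤ B` -/
  iStar : A ⥤ B
  /-- `i^* : B ⥤ A` -/
  iUpperStar : B ⥤ A
  /-- `i^! : B ⥤ A` -/
  iShriek : B ⥤ A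
  /-- `j^* : B ⥤ C` -/
  jUpperStar : B ⥤ C
  /-- `j_! : C ⥤ B` -/
  jShriek : C ⥤ B
  /-- `j_* : C ⥤ B` -/
  jStar : C ⥤ B
  /-- `i^* ⊣ i_*` -/
  adj₁ : iUpperStar ⊣ iStar
  /-- `i_* ⊣ i^!` -/
  adj₂ : iStar ⊣ iShriek
  /-- `j_! ⊣ j^*` -/
  adj₃ : jShriek ⊣ jUpperStar
  /-- `j^* ⊣ j_*` -/
  adj₄ : jUpperStar ⊣ jStar
  iStar_full : iStar.Full
  iStar_faithful : iStar.Faithful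
  jShriek_full : jShriek.Full
  jShriek_faithful : jShriek.Faithful
  jStar_full : jStar.Full
  jStar_faithful : jStar.Faithful
  /-- `j^*(X) ≅ 0` iff `X` lies in the essential image of `i_*`. -/
  isZero_iff : ∀ X : B, IsZero (jUpperStar.obj X) ↔ ∃ Y : A, Nonempty (iStar.obj Y ≅ X)
  /-- the sequence `0 ⟶ i_* i^! X ⟶ X ⟶ j_* j^* X` is exact. -/
  left_exact_seq : ∀ X : B, Mono (adj₂.counit.app X) ∧
    ∃ w : adj₂.counit.app X ≫ adj₄.unit.app X = 0,
      (ShortComplex.mk (adj₂.counit.app X) (adj₄.unit.app X) w).Exact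
  /-- the sequence `j_! j^* X ⟶ X ⟶ i_* i^* X ⟶ 0` is exact. -/
  right_exact_seq : ∀ X : B, Epi (adj₁.unit.app X) ∧
    ∃ w : adj₃.counit.app X ≫ adj₁.unit.app X = 0,
      (ShortComplex.mk (adj₃.counit.app X) (adj₁.unit.app X) w).Exact

variable {𝒞 : Type*} [Category 𝒞] [Abelian 𝒞]

/-- A torsion pair `(T, F)` in an abelian category. -/
structure IsTorsionPair (T F : Set 𝒞) : Prop where
  isoClosed_torsion : ∀ {X Y : 𝒞}, (X ≅ Y) → X ∈ T → Y ∈ T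
  isoClosed_free : ∀ {X Y : 𝒞}, (X ≅ Y) → X ∈ F → Y ∈ F
  hom_zero : ∀ {X Y : 𝒞}, X ∈ T → Y ∈ F → ∀ f : X ⟶ Y, f = 0
  exists_ses : ∀ X : 𝒞, ∃ (T' F' : 𝒞) (_ : T' ∈ T) (_ : F' ∈ F)
      (i : T' ⟶ X) (p : X ⟶ F') (w : i ≫ p = 0),
      (ShortComplex.mk i p w).ShortExact

end RecollementFS

namespace CategoryTheory

variable {𝒞 𝒟 : Type*} [Category 𝒞] [Category 𝒟]

lemma Adjunction.map_homEquiv_comp_counit {L : 𝒞 ⥤ 𝒟} {G : 𝒟 ⥤ 𝒞} (adj : L ⊣ G) {X : 𝒞}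
    {Z : 𝒟} (p : L.obj X ⟶ Z) : L.map (adj.homEquiv X Z p) ≫ adj.counit.app Z = p := by
  simp [Adjunction.homEquiv_unit]

namespace ShortComplex

variable [HasZeroMorphisms 𝒞]

lemma Exact.of_epi_comp {S : ShortComplex 𝒞} (h : S.Exact) {X₀ : 𝒞} {f : X₀ ⟶ S.X₂}
    (e : X₀ ⟶ S.X₁) [Epi e] (hf : e ≫ S.f = f) :
    (ShortComplex.mk f S.g (by rw [← hf, Category.assoc, S.zero, comp_zero])).Exact :=
  (exact_iff_of_epi_of_isIso_of_mono
    { τ₁ := e, τ₂ := 𝟙 _, τ₃ := 𝟙 _, comm₁₂ := by simp [hf] : ShortComplex.mk f S.g _ ⟶ S}).2 h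

lemma Exact.comp_mono {S : ShortComplex 𝒞} (h : S.Exact) {Z : 𝒞} {g : S.X₂ ⟶ Z}
    (m : S.X₃ ⟶ Z) [Mono m] (hg : S.g ≫ m = g) :
    (ShortComplex.mk S.f g (by rw [← hg, S.zero_assoc, zero_comp])).Exact :=
  (exact_iff_of_epi_of_isIso_of_mono
    { τ₁ := 𝟙 _, τ₂ := 𝟙 _, τ₃ := m, comm₂₃ := by simp [hg] :
      S ⟶ ShortComplex.mk S.f g _}).1 h

lemma Exact.of_comp_iso {S : ShortComplex 𝒞} (h : S.Exact) {Y : 𝒞} {f : S.X₁ ⟶ Y}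
    (e : Y ≅ S.X₂) (hf : f ≫ e.hom = S.f) :
    (ShortComplex.mk f (e.hom ≫ S.g) (by rw [← Category.assoc, hf, S.zero])).Exact :=
  (exact_iff_of_epi_of_isIso_of_mono
    { τ₁ := 𝟙 _, τ₂ := e.hom, τ₃ := 𝟙 _, comm₁₂ := by simp [hf] :
      ShortComplex.mk f (e.hom ≫ S.g) _ ⟶ S}).2 h

end ShortComplex

variable [Abelian 𝒞] [Abelian 𝒟]

lemma Functor.exact_map_kernel_ι (G : 𝒞 ⥤ 𝒟) [G.PreservesZeroMorphisms]
    [PreservesFiniteLimits G] {X Y : 𝒞} (f : X ⟶ Y) :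
    (ShortComplex.mk (G.map (kernel.ι f)) (G.map f)
      (by rw [← G.map_comp, kernel.condition, G.map_zero])).Exact :=
  (ShortComplex.exact_of_f_is_kernel (.mk _ _ (kernel.condition f))
    (kernelIsKernel f)).map_of_mono_of_preservesKernel G inferInstance inferInstance

lemma Functor.exact_map_cokernel_π (G : 𝒞 ⥤ 𝒟) [G.PreservesZeroMorphisms]
    [PreservesFiniteColimits G] {X Y : 𝒞} (f : X ⟶ Y) :
    (ShortComplex.mk (G.map f) (G.map (cokernel.π f))
      (by rw [← G.map_comp, cokernel.condition, G.map_zero])).Exact :=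
  (ShortComplex.exact_of_g_is_cokernel (.mk _ _ (cokernel.condition f))
    (cokernelIsCokernel f)).map_of_epi_of_preservesCokernel G inferInstance inferInstance

lemma Functor.isIso_map_kernel_ι_of_isZero (G : 𝒞 ⥤ 𝒟) [G.PreservesZeroMorphisms]
    [PreservesFiniteLimits G] {X Y : 𝒞} (f : X ⟶ Y) (hY : IsZero (G.obj Y)) :
    IsIso (G.map (kernel.ι f)) := by
  have : Epi (G.map (kernel.ι f)) := (G.exact_map_kernel_ι f).epi_f (hY.eq_of_tgt _ _)
  exact isIso_of_mono_of_epi _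

namespace Adjunction

variable {L : 𝒞 ⥤ 𝒟} {G : 𝒟 ⥤ 𝒞} (adj : L ⊣ G)

lemma map_kernel_ι_homEquiv_comp [L.PreservesZeroMorphisms] {X : 𝒞} {Z : 𝒟}
    (p : L.obj X ⟶ Z) : L.map (kernel.ι (adj.homEquiv X Z p)) ≫ p = 0 :=
  calc L.map (kernel.ι (adj.homEquiv X Z p)) ≫ p
      = L.map (kernel.ι (adj.homEquiv X Z p) ≫ adj.homEquiv X Z p) ≫ adj.counit.app Z := by
        rw [L.map_comp_assoc, adj.map_homEquiv_comp_counit]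
    _ = 0 := by rw [kernel.condition, L.map_zero, zero_comp]

lemma exact_map_kernel_ι_homEquiv [G.Full] [G.Faithful] [L.PreservesZeroMorphisms]
    [PreservesFiniteLimits L] {X : 𝒞} {Z : 𝒟} (p : L.obj X ⟶ Z) :
    (ShortComplex.mk _ _ (adj.map_kernel_ι_homEquiv_comp p)).Exact :=
  (L.exact_map_kernel_ι _).comp_mono (adj.counit.app Z) (adj.map_homEquiv_comp_counit p)

end Adjunction

end CategoryTheory

namespace RecollementFS

variable {𝒞 : Type*} [Category 𝒞] [Abelian 𝒞]

namespace IsTorsionPair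

variable {T F : Set 𝒞}

lemma mem_torsion_of_exact (h : IsTorsionPair T F) {X Y Y' Z : 𝒞} {f : Y ⟶ X}
    {f' : Y' ⟶ X} {g : X ⟶ Z} {w : f ≫ g = 0} {w' : f' ≫ g = 0}
    (hf : (ShortComplex.mk f g w).Exact) (hf' : (ShortComplex.mk f' g w').Exact)
    [Mono f] [Mono f'] (hY : Y ∈ T) : Y' ∈ T :=
  h.isoClosed_torsion (IsLimit.conePointUniqueUpToIso hf.fIsKernel hf'.fIsKernel) hY

lemma mem_free_of_exact (h : IsTorsionPair T F) {X Y Z Z' : 𝒞} {f : Y ⟶ X}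
    {g : X ⟶ Z} {g' : X ⟶ Z'} {w : f ≫ g = 0} {w' : f ≫ g' = 0}
    (hg : (ShortComplex.mk f g w).Exact) (hg' : (ShortComplex.mk f g' w').Exact)
    [Epi g] [Epi g'] (hZ : Z ∈ F) : Z' ∈ F :=
  h.isoClosed_free (IsColimit.coconePointUniqueUpToIso hg.gIsCokernel hg'.gIsCokernel) hZ

end IsTorsionPair

namespace AbelianRecollement

variable {A B C : Type*} [Category A] [Category B] [Category C] [Abelian A] [Abelian B]
  [Abelian C] (R : AbelianRecollement A B C)

instance : R.iStar.Full := R.iStar_full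
instance : R.iStar.Faithful := R.iStar_faithful
instance : R.jStar.Full := R.jStar_full
instance : R.jStar.Faithful := R.jStar_faithful
instance : R.iStar.IsLeftAdjoint := R.adj₂.isLeftAdjoint
instance : R.iShriek.IsRightAdjoint := R.adj₂.isRightAdjoint
instance : R.jUpperStar.IsLeftAdjoint := R.adj₄.isLeftAdjoint
instance : R.jUpperStar.IsRightAdjoint := R.adj₃.isRightAdjoint

lemma isZero_jUpperStar_obj_iStar (Y : A) : IsZero (R.jUpperStar.obj (R.iStar.obj Y)) :=
  (R.isZero_iff _).2 ⟨Y, ⟨Iso.refl _⟩⟩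

lemma isZero_iShriek_obj_jStar (Z : C) : IsZero (R.iShriek.obj (R.jStar.obj Z)) := by
  -- `Hom(Y, i^! j_* Z) ≃ Hom(i_* Y, j_* Z) ≃ Hom(j^* i_* Y, Z) = 0`
  rw [IsZero.iff_id_eq_zero]
  apply (R.adj₂.homEquiv _ _).symm.injective
  apply (R.adj₄.homEquiv _ _).symm.injective
  exact (R.isZero_jUpperStar_obj_iStar _).eq_of_src _ _

lemma epi_adj₁_homEquiv {X : B} {Z : A} (p : R.iUpperStar.obj X ⟶ Z) [Epi p] :
    Epi (R.adj₁.homEquiv X Z p) := by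
  have := (R.right_exact_seq X).1
  rw [Adjunction.homEquiv_unit]
  exact epi_comp _ _

lemma eq_zero_of_jUpperStar_map_eq_zero {X Y : B} (f : X ⟶ Y) (hj : R.jUpperStar.map f = 0)
    (hi : ∀ g : R.iUpperStar.obj X ⟶ R.iShriek.obj Y, g = 0) : f = 0 := by
  obtain ⟨_, w, hex⟩ := R.left_exact_seq Y
  have hf : f ≫ R.adj₄.unit.app Y = 0 := by
    rw [← R.adj₄.unit_naturality, hj, Functor.map_zero, comp_zero]
  have hlift : hex.lift f hf = 0 :=
    (R.adj₁.homEquiv _ _).symm.injective ((hi _).trans (hi _).symm)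
  rw [← hex.lift_f f hf, hlift, zero_comp]

def gluedTorsion (T₁ : Set A) (T₂ : Set C) : Set B :=
  {X | R.iUpperStar.obj X ∈ T₁ ∧ R.jUpperStar.obj X ∈ T₂}

def gluedFree (F₁ : Set A) (F₂ : Set C) : Set B :=
  {X | R.iShriek.obj X ∈ F₁ ∧ R.jUpperStar.obj X ∈ F₂}

variable {T₁ F₁ : Set A} {T₂ F₂ : Set C}

theorem exists_shortExact_glued [PreservesFiniteLimits R.iUpperStar]
    [PreservesFiniteColimits R.iShriek] (hA : IsTorsionPair T₁ F₁) (hC : IsTorsionPair T₂ F₂)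
    (X : B) :
    ∃ (T F : B) (_ : T ∈ R.gluedTorsion T₁ T₂) (_ : F ∈ R.gluedFree F₁ F₂) (i : T ⟶ X)
      (p : X ⟶ F) (w : i ≫ p = 0), (ShortComplex.mk i p w).ShortExact := by
  obtain ⟨TC, FC, hTC, hFC, iC, pC, wC, hSC⟩ := hC.exists_ses (R.jUpperStar.obj X)
  set α := R.adj₄.homEquiv _ _ pC
  obtain ⟨TA, FA, hTA, hFA, iA, pA, wA, hSA⟩ := hA.exists_ses (R.iUpperStar.obj (kernel α))
  set β := R.adj₁.homEquiv _ _ pA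
  have := hSC.mono_f
  have := hSC.epi_g
  have := hSA.mono_f
  have := hSA.epi_g
  have := R.epi_adj₁_homEquiv pA
  have hβ : (ShortComplex.mk _ _ (kernel.condition β)).ShortExact :=
    ⟨ShortComplex.exact_of_f_is_kernel _ (kernelIsKernel β)⟩
  have hS : (ShortComplex.mk _ _ (cokernel.condition (kernel.ι β ≫ kernel.ι α))).ShortExact :=
    ⟨ShortComplex.exact_of_g_is_cokernel _ (cokernelIsCokernel _)⟩
  have := R.jUpperStar.isIso_map_kernel_ι_of_isZero β (R.isZero_jUpperStar_obj_iStar FA)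
  have hjT := (R.adj₄.exact_map_kernel_ι_homEquiv pC).of_epi_comp
    (R.jUpperStar.map (kernel.ι β)) (R.jUpperStar.map_comp _ _).symm
  refine ⟨kernel β, cokernel (kernel.ι β ≫ kernel.ι α), ⟨?_, ?_⟩, ⟨?_, ?_⟩, _, _, _, hS⟩
  · exact hA.mem_torsion_of_exact hSA.exact (R.adj₁.exact_map_kernel_ι_homEquiv pA) hTA
  · exact hC.mem_torsion_of_exact hSC.exact hjT hTC
  · have := R.iShriek.isIso_map_kernel_ι_of_isZero α (R.isZero_iShriek_obj_jStar FC)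
    have hiβ := hβ.map_of_exact R.iShriek
    have := hiβ.epi_g
    have hiF := (R.iShriek.exact_map_cokernel_π (kernel.ι β ≫ kernel.ι α)).of_comp_iso
      (asIso (R.iShriek.map (kernel.ι α))) (R.iShriek.map_comp _ _).symm
    exact hA.mem_free_of_exact hiβ.exact hiF
      (hA.isoClosed_free (asIso (R.adj₂.unit.app FA)) hFA)
  · exact hC.mem_free_of_exact hjT (R.jUpperStar.exact_map_cokernel_π _) hFC

end AbelianRecollement

theorem glue_torsionPair_of_recollement_general
    {A B C : Type*} [Category A] [Category B] [Category C]
    [Abelian A] [Abelian B] [Abelian C]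
    (R : AbelianRecollement A B C)
    (h₁ : PreservesFiniteLimits R.iUpperStar)
    (h₄ : PreservesFiniteColimits R.iShriek)
    (T₁ F₁ : Set A) (T₂ F₂ : Set C)
    (hA : IsTorsionPair T₁ F₁) (hC : IsTorsionPair T₂ F₂) :
    IsTorsionPair
      {X : B | R.iUpperStar.obj X ∈ T₁ ∧ R.jUpperStar.obj X ∈ T₂}
      {X : B | R.iShriek.obj X ∈ F₁ ∧ R.jUpperStar.obj X ∈ F₂} := by
  refine ⟨fun e hX ↦ ?_, fun e hX ↦ ?_, fun hX hY f ↦ ?_, R.exists_shortExact_glued hA hC⟩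
  · exact ⟨hA.isoClosed_torsion (R.iUpperStar.mapIso e) hX.1,
      hC.isoClosed_torsion (R.jUpperStar.mapIso e) hX.2⟩
  · exact ⟨hA.isoClosed_free (R.iShriek.mapIso e) hX.1,
      hC.isoClosed_free (R.jUpperStar.mapIso e) hX.2⟩
  · exact R.eq_zero_of_jUpperStar_map_eq_zero f (hC.hom_zero hX.2 hY.2 _) (hA.hom_zero hX.1 hY.1)

/-- gluing torsion pairs along a recollement of abelian categories,
assuming `i^*` and `i^!` are exact. -/
theorem glue_torsionPair_of_recollement
    {A B C : Type*} [Category A] [Category B] [Category C]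
    [Abelian A] [Abelian B] [Abelian C]
    (R : AbelianRecollement A B C)
    (h₁ : PreservesFiniteLimits R.iUpperStar) (h₂ : PreservesFiniteColimits R.iUpperStar)
    (h₃ : PreservesFiniteLimits R.iShriek) (h₄ : PreservesFiniteColimits R.iShriek)
    (T₁ F₁ : Set A) (T₂ F₂ : Set C)
    (hA : IsTorsionPair T₁ F₁) (hC : IsTorsionPair T₂ F₂) :
    IsTorsionPair
      {X : B | R.iUpperStar.obj X ∈ T₁ ∧ R.jUpperStar.obj X ∈ T₂}
      {X : B | R.iShriek.obj X ∈ F₁ ∧ R.jUpperStar.obj X ∈ F₂} :=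
  glue_torsionPair_of_recollement_general R h₁ h₄ T₁ F₁ T₂ F₂ hA hC

end RecollementFS
end

section
/- Let (A, B, C) be a recollement of triangulated categories with functors i^*, i_*, i^!, j_!, j^*, j_*. Let (T1, F1) and (T2, F2) be t-structures in A and C, respectively. Set T = {B ∈ B | i^*(B) ∈ T1 and j^*(B) ∈ T2} and F = {B ∈ B | i^!(B) ∈ F1 and j^*(B) ∈ F2}. Then (T, F) is a t-structure in B. -/
/-!
Orthogonality: the triangle `j_! j^* X ⟶ X ⟶ i_* i^* X ⟶` reduces a map from the glued aisle
to the glued coaisle, by adjunction, to maps `j^* X ⟶ j^* Y` and `i^* X ⟶ i^! Y`.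

Truncation: truncate `j^* X` in `C` and take the fibre `Z` of `X ⟶ j_* V₂`; truncate `i^* Z` in
`A` and take the fibre `U` of `Z ⟶ i_* V₁`. Then `U` lies in the glued aisle, and the cone `V` of
`U ⟶ X` lies in the glued coaisle because a coaisle is the right orthogonal of its aisle and `V`
is glued from `i_* V₁` and `j_* V₂`.
-/

open CategoryTheory CategoryTheory.Limits CategoryTheory.Pretriangulated

namespace RecollementFS

variable (A B C : Type*) [Category A] [Category B] [Category C]
  [Preadditive A] [Preadditive B] [Preadditive C]
  [HasZeroObject A] [HasZeroObject B] [HasZeroObject C]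
  [HasShift A ℤ] [HasShift B ℤ] [HasShift C ℤ]
  [∀ n : ℤ, (shiftFunctor A n).Additive] [∀ n : ℤ, (shiftFunctor B n).Additive]
  [∀ n : ℤ, (shiftFunctor C n).Additive]
  [Pretriangulated A] [Pretriangulated B] [Pretriangulated C]

/-- A recollement of triangulated categories `(A, B, C)`. -/
structure TriangulatedRecollement where
  /-- `i_* : A ⥤ B` -/
  iStar : A ⥤ B
  /-- `i^* : B ⥤ A` -/
  iUpperStar : B ⥤ A
  /-- `i^! : B ⥤ A` -/
  iShriek : B ⥤ A
  /-- `j^* : B ⥤ C` -/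
  jUpperStar : B ⥤ C
  /-- `j_! : C ⥤ B` -/
  jShriek : C ⥤ B
  /-- `j_* : C ⥤ B` -/
  jStar : C ⥤ B
  iStar_commShift : iStar.CommShift ℤ
  iUpperStar_commShift : iUpperStar.CommShift ℤ
  iShriek_commShift : iShriek.CommShift ℤ
  jUpperStar_commShift : jUpperStar.CommShift ℤ
  jShriek_commShift : jShriek.CommShift ℤ
  jStar_commShift : jStar.CommShift ℤ
  iStar_triangulated : letI := iStar_commShift; iStar.IsTriangulated
  iUpperStar_triangulated : letI := iUpperStar_commShift; iUpperStar.IsTriangulated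
  iShriek_triangulated : letI := iShriek_commShift; iShriek.IsTriangulated
  jUpperStar_triangulated : letI := jUpperStar_commShift; jUpperStar.IsTriangulated
  jShriek_triangulated : letI := jShriek_commShift; jShriek.IsTriangulated
  jStar_triangulated : letI := jStar_commShift; jStar.IsTriangulated
  /-- `i^* ⊣ i_*` -/
  adj₁ : iUpperStar ⊣ iStar
  /-- `i_* ⊣ i^!` -/
  adj₂ : iStar ⊣ iShriek
  /-- `j_! ⊣ j^*` -/
  adj₃ : jShriek ⊣ jUpperStar
  /-- `j^* ⊣ j_*` -/
  adj₄ : jUpperStar ⊣ jStar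
  iStar_full : iStar.Full
  iStar_faithful : iStar.Faithful
  jShriek_full : jShriek.Full
  jShriek_faithful : jShriek.Faithful
  jStar_full : jStar.Full
  jStar_faithful : jStar.Faithful
  /-- `j^*(X) ≅ 0` iff `X` lies in the essential image of `i_*`. -/
  isZero_iff : ∀ X : B, IsZero (jUpperStar.obj X) ↔ ∃ Y : A, Nonempty (iStar.obj Y ≅ X)
  /-- the distinguished triangle `i_* i^! X ⟶ X ⟶ j_* j^* X ⟶ (i_* i^! X)⟦1⟧`. -/
  triangle₁ : ∀ X : B, ∃ h : jStar.obj (jUpperStar.obj X) ⟶ (iStar.obj (iShriek.obj X))⟦(1 : ℤ)⟧,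
    Triangle.mk (adj₂.counit.app X) (adj₄.unit.app X) h ∈ distTriang B
  /-- the distinguished triangle `j_! j^* X ⟶ X ⟶ i_* i^* X ⟶ (j_! j^* X)⟦1⟧`. -/
  triangle₂ : ∀ X : B, ∃ h : iStar.obj (iUpperStar.obj X) ⟶ (jShriek.obj (jUpperStar.obj X))⟦(1 : ℤ)⟧,
    Triangle.mk (adj₃.counit.app X) (adj₁.unit.app X) h ∈ distTriang B

variable {𝒟 : Type*} [Category 𝒟] [Preadditive 𝒟] [HasZeroObject 𝒟]
  [HasShift 𝒟 ℤ] [∀ n : ℤ, (shiftFunctor 𝒟 n).Additive] [Pretriangulated 𝒟]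

/-- A `t`-structure `(U, V)` in a triangulated category. -/
structure IsTStructure (U V : Set 𝒟) : Prop where
  isoClosed_left : ∀ {X Y : 𝒟}, (X ≅ Y) → X ∈ U → Y ∈ U
  isoClosed_right : ∀ {X Y : 𝒟}, (X ≅ Y) → X ∈ V → Y ∈ V
  exists_triangle : ∀ X : 𝒟, ∃ (U' V' : 𝒟) (_ : U' ∈ U) (_ : V' ∈ V)
      (f : U' ⟶ X) (g : X ⟶ V') (h : V' ⟶ U'⟦(1 : ℤ)⟧),
      Triangle.mk f g h ∈ distTriang 𝒟
  hom_zero : ∀ {X Y : 𝒟}, X ∈ U → Y ∈ V → ∀ f : X ⟶ Y, f = 0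
  shift_mem : ∀ {X : 𝒟}, X ∈ U → X⟦(1 : ℤ)⟧ ∈ U

lemma nonempty_iso_obj₁_of_distTriang {T T' : Triangle 𝒟} (hT : T ∈ distTriang 𝒟)
    (hT' : T' ∈ distTriang 𝒟) (e₂ : T.obj₂ ≅ T'.obj₂) (e₃ : T.obj₃ ≅ T'.obj₃)
    (comm : T.mor₂ ≫ e₃.hom = e₂.hom ≫ T'.mor₂) : Nonempty (T.obj₁ ≅ T'.obj₁) := by
  obtain ⟨a, comm₁, comm₃⟩ :=
    complete_distinguished_triangle_morphism₁ T T' hT hT' e₂.hom e₃.hom comm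
  have : IsIso a := isIso₁_of_isIso₂₃ ⟨a, e₂.hom, e₃.hom, comm₁, comm, comm₃⟩ hT hT'
    (inferInstanceAs (IsIso e₂.hom)) (inferInstanceAs (IsIso e₃.hom))
  exact ⟨asIso a⟩

lemma subsingleton_hom_obj₂_of_distTriang {X₁ X₂ X₃ Y : 𝒟} {f₁ : X₁ ⟶ X₂} {f₂ : X₂ ⟶ X₃}
    {f₃ : X₃ ⟶ X₁⟦(1 : ℤ)⟧} (hT : Triangle.mk f₁ f₂ f₃ ∈ distTriang 𝒟)
    (h₁ : Subsingleton (X₁ ⟶ Y)) (h₃ : Subsingleton (X₃ ⟶ Y)) : Subsingleton (X₂ ⟶ Y) := by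
  refine subsingleton_of_forall_eq 0 fun f => ?_
  obtain ⟨g, rfl⟩ : ∃ g : X₃ ⟶ Y, f = f₂ ≫ g := Triangle.yoneda_exact₂ _ hT f (h₁.elim _ _)
  rw [h₃.elim g 0, comp_zero]

/-- With the octahedral axiom `V` would be an extension of `J` by `I`; in a pretriangulated
category a diagram chase still gives this consequence. -/
lemma subsingleton_hom_cone_comp {U Z X I J V W : 𝒟} {u : U ⟶ Z} {z : Z ⟶ X} {b : Z ⟶ I}
    {a : X ⟶ J} {dI : I ⟶ U⟦(1 : ℤ)⟧} {dJ : J ⟶ Z⟦(1 : ℤ)⟧} {p : X ⟶ V} {dV : V ⟶ U⟦(1 : ℤ)⟧}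
    (hU : Triangle.mk u b dI ∈ distTriang 𝒟) (hZ : Triangle.mk z a dJ ∈ distTriang 𝒟)
    (hV : Triangle.mk (u ≫ z) p dV ∈ distTriang 𝒟)
    (hI : Subsingleton (W ⟶ I)) (hJ : Subsingleton (W ⟶ J)) : Subsingleton (W ⟶ V) := by
  have factor : ∀ ψ : W ⟶ X, ∃ ψ' : W ⟶ U, ψ = ψ' ≫ u ≫ z := by
    intro ψ
    obtain ⟨ψ₁, rfl⟩ := Triangle.coyoneda_exact₂ _ hZ ψ (hJ.elim _ 0)
    obtain ⟨ψ₂, rfl⟩ := Triangle.coyoneda_exact₂ _ hU ψ₁ (hI.elim _ 0)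
    exact ⟨ψ₂, Category.assoc _ _ _⟩
  have comp_dV : ∀ φ : W ⟶ V, φ ≫ dV = 0 := by
    intro φ
    have h₁ : (φ ≫ dV ≫ u⟦(1 : ℤ)⟧') ≫ z⟦(1 : ℤ)⟧' = 0 := by
      have h : dV ≫ (u ≫ z)⟦(1 : ℤ)⟧' = 0 := comp_distTriang_mor_zero₃₁ _ hV
      rw [Category.assoc, Category.assoc, ← Functor.map_comp, h, comp_zero]
    obtain ⟨g, hg⟩ : ∃ g : W ⟶ J, φ ≫ dV ≫ u⟦(1 : ℤ)⟧' = g ≫ dJ :=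
      Triangle.coyoneda_exact₁ _ hZ _ h₁
    have h₂ : (φ ≫ dV) ≫ u⟦(1 : ℤ)⟧' = 0 := by
      rw [Category.assoc, hg, hJ.elim g 0, zero_comp]
    obtain ⟨g', hg'⟩ : ∃ g' : W ⟶ I, φ ≫ dV = g' ≫ dI := Triangle.coyoneda_exact₁ _ hU _ h₂
    rw [hg', hI.elim g' 0, zero_comp]
  refine subsingleton_of_forall_eq 0 fun φ => ?_
  obtain ⟨ψ, rfl⟩ : ∃ ψ : W ⟶ X, φ = ψ ≫ p := Triangle.coyoneda_exact₃ _ hV φ (comp_dV φ)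
  obtain ⟨ψ', rfl⟩ := factor ψ
  have h : (u ≫ z) ≫ p = 0 := comp_distTriang_mor_zero₁₂ _ hV
  rw [Category.assoc, h, comp_zero]

namespace IsTStructure

variable {U V : Set 𝒟}

lemma subsingleton_hom (h : IsTStructure U V) {X Y : 𝒟} (hX : X ∈ U) (hY : Y ∈ V) :
    Subsingleton (X ⟶ Y) :=
  subsingleton_of_forall_eq 0 (h.hom_zero hX hY)

/-- As `U' ⟶ Y` vanishes in the truncation triangle `U' ⟶ Y ⟶ V' ⟶ U'⟦1⟧`, the identity of
`U'⟦1⟧` factors through `V'`, hence is zero. -/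
lemma mem_right_of_forall_subsingleton (h : IsTStructure U V) {Y : 𝒟}
    (hY : ∀ X ∈ U, Subsingleton (X ⟶ Y)) : Y ∈ V := by
  obtain ⟨U', V', hU', hV', f, g, k, hT⟩ := h.exists_triangle Y
  have hf : f = 0 := (hY U' hU').elim _ _
  obtain ⟨s, hs⟩ : ∃ s : U'⟦(1 : ℤ)⟧ ⟶ V', 𝟙 _ = s ≫ k :=
    Triangle.coyoneda_exact₃ _ (rot_of_distTriang _ hT) (𝟙 _)
      (show 𝟙 (U'⟦(1 : ℤ)⟧) ≫ (-f⟦(1 : ℤ)⟧') = 0 by simp [hf])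
  have hzero : IsZero (U'⟦(1 : ℤ)⟧) := by
    rw [IsZero.iff_id_eq_zero, hs, h.hom_zero (h.shift_mem hU') hV' s, zero_comp]
  have : IsIso g := (Triangle.isZero₃_iff_isIso₁ _ (rot_of_distTriang _ hT)).1 hzero
  exact h.isoClosed_right (asIso g).symm hV'

end IsTStructure

section Adjunction

variable {𝒞 : Type*} [Category 𝒞] [Preadditive 𝒞] [HasZeroObject 𝒞]
  [HasShift 𝒞 ℤ] [∀ n : ℤ, (shiftFunctor 𝒞 n).Additive] [Pretriangulated 𝒞]
  {F : 𝒞 ⥤ 𝒟} {G : 𝒟 ⥤ 𝒞} [G.Full] [G.Faithful] [F.CommShift ℤ] [F.IsTriangulated]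

lemma nonempty_obj₁_iso_of_distTriang_homEquiv (adj : F ⊣ G) {U X : 𝒞} {Y : 𝒟}
    {q : F.obj X ⟶ Y} {u : U ⟶ X} {d : G.obj Y ⟶ U⟦(1 : ℤ)⟧}
    (hT : Triangle.mk u (adj.homEquiv X Y q) d ∈ distTriang 𝒞) {U' : 𝒟} {u' : U' ⟶ F.obj X}
    {d' : Y ⟶ U'⟦(1 : ℤ)⟧} (hT' : Triangle.mk u' q d' ∈ distTriang 𝒟) :
    Nonempty (F.obj U ≅ U') :=
  nonempty_iso_obj₁_of_distTriang (F.map_distinguished _ hT) hT' (Iso.refl (F.obj X))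
    (asIso (adj.counit.app Y) : F.obj (G.obj Y) ≅ Y)
    (show F.map (adj.homEquiv X Y q) ≫ adj.counit.app Y = 𝟙 _ ≫ q by
      rw [Category.id_comp]
      exact (adj.homEquiv X Y).symm_apply_apply q)

end Adjunction

namespace TriangulatedRecollement

variable {A B C} (R : TriangulatedRecollement A B C)

attribute [local instance] iStar_full iStar_faithful jStar_full jStar_faithful
  iUpperStar_commShift jUpperStar_commShift iUpperStar_triangulated jUpperStar_triangulated

def gluedAisle (T₁ : Set A) (T₂ : Set C) : Set B :=
  {X | R.iUpperStar.obj X ∈ T₁ ∧ R.jUpperStar.obj X ∈ T₂}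

def gluedCoaisle (F₁ : Set A) (F₂ : Set C) : Set B :=
  {X | R.iShriek.obj X ∈ F₁ ∧ R.jUpperStar.obj X ∈ F₂}

lemma isZero_jUpperStar_obj_iStar_obj (Y : A) : IsZero (R.jUpperStar.obj (R.iStar.obj Y)) :=
  (R.isZero_iff _).2 ⟨Y, ⟨Iso.refl _⟩⟩

lemma subsingleton_iStar_obj_jStar_obj (X : A) (Y : C) :
    Subsingleton (R.iStar.obj X ⟶ R.jStar.obj Y) :=
  have : Subsingleton (R.jUpperStar.obj (R.iStar.obj X) ⟶ Y) :=
    ⟨(R.isZero_jUpperStar_obj_iStar_obj X).eq_of_src⟩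
  (R.adj₄.homEquiv _ _).symm.subsingleton

lemma subsingleton_jShriek_obj_iStar_obj (X : C) (Y : A) :
    Subsingleton (R.jShriek.obj X ⟶ R.iStar.obj Y) :=
  have : Subsingleton (X ⟶ R.jUpperStar.obj (R.iStar.obj Y)) :=
    ⟨(R.isZero_jUpperStar_obj_iStar_obj Y).eq_of_tgt⟩
  (R.adj₃.homEquiv _ _).subsingleton

lemma subsingleton_iStar_obj_iStar_obj {X Y : A} (h : Subsingleton (X ⟶ Y)) :
    Subsingleton (R.iStar.obj X ⟶ R.iStar.obj Y) :=
  (Functor.FullyFaithful.ofFullyFaithful R.iStar).homEquiv.symm.subsingleton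

lemma subsingleton_jShriek_obj_jStar_obj {X Y : C} (h : Subsingleton (X ⟶ Y)) :
    Subsingleton (R.jShriek.obj X ⟶ R.jStar.obj Y) :=
  ((R.adj₃.homEquiv _ _).trans
    ((Iso.refl X).homCongr
      (asIso (R.adj₄.counit.app Y) : R.jUpperStar.obj (R.jStar.obj Y) ≅ Y))).subsingleton

variable {T₁ F₁ : Set A} {T₂ F₂ : Set C}

lemma hom_eq_zero_of_mem_gluedAisle_of_mem_gluedCoaisle (hA : IsTStructure T₁ F₁)
    (hC : IsTStructure T₂ F₂) {X Y : B} (hX : X ∈ R.gluedAisle T₁ T₂)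
    (hY : Y ∈ R.gluedCoaisle F₁ F₂) (f : X ⟶ Y) : f = 0 := by
  obtain ⟨h, hT⟩ := R.triangle₂ X
  have h₁ : Subsingleton (R.jShriek.obj (R.jUpperStar.obj X) ⟶ Y) :=
    have := hC.subsingleton_hom hX.2 hY.2
    (R.adj₃.homEquiv _ _).subsingleton
  have h₃ : Subsingleton (R.iStar.obj (R.iUpperStar.obj X) ⟶ Y) :=
    have := hA.subsingleton_hom hX.1 hY.1
    (R.adj₂.homEquiv _ _).subsingleton
  exact (subsingleton_hom_obj₂_of_distTriang hT h₁ h₃).elim _ _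

lemma mem_gluedCoaisle_of_forall_subsingleton (hA : IsTStructure T₁ F₁)
    (hC : IsTStructure T₂ F₂) {V : B} (h₁ : ∀ X ∈ T₁, Subsingleton (R.iStar.obj X ⟶ V))
    (h₂ : ∀ X ∈ T₂, Subsingleton (R.jShriek.obj X ⟶ V)) : V ∈ R.gluedCoaisle F₁ F₂ :=
  ⟨hA.mem_right_of_forall_subsingleton fun X hX =>
      have := h₁ X hX
      (R.adj₂.homEquiv _ _).symm.subsingleton,
    hC.mem_right_of_forall_subsingleton fun X hX =>
      have := h₂ X hX
      (R.adj₃.homEquiv _ _).symm.subsingleton⟩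

lemma exists_distTriang_gluedAisle_gluedCoaisle (hA : IsTStructure T₁ F₁)
    (hC : IsTStructure T₂ F₂) (X : B) :
    ∃ (U V : B) (_ : U ∈ R.gluedAisle T₁ T₂) (_ : V ∈ R.gluedCoaisle F₁ F₂)
      (f : U ⟶ X) (g : X ⟶ V) (h : V ⟶ U⟦(1 : ℤ)⟧), Triangle.mk f g h ∈ distTriang B := by
  obtain ⟨U₂, V₂, hU₂, hV₂, u₂, v₂, w₂, hT₂⟩ := hC.exists_triangle (R.jUpperStar.obj X)
  obtain ⟨Z, z, dZ, hTZ⟩ := distinguished_cocone_triangle₁ (R.adj₄.homEquiv _ _ v₂)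
  obtain ⟨U₁, V₁, hU₁, hV₁, u₁, v₁, w₁, hT₁⟩ := hA.exists_triangle (R.iUpperStar.obj Z)
  obtain ⟨U, u, dU, hTU⟩ := distinguished_cocone_triangle₁ (R.adj₁.homEquiv _ _ v₁)
  obtain ⟨V, p, dV, hTV⟩ := distinguished_cocone_triangle (u ≫ z)
  refine ⟨U, V, ⟨?_, ?_⟩, ?_, _, _, _, hTV⟩
  · obtain ⟨e⟩ := nonempty_obj₁_iso_of_distTriang_homEquiv R.adj₁ hTU hT₁
    exact hA.isoClosed_left e.symm hU₁
  · have : IsIso (R.jUpperStar.map u) := (Triangle.isZero₃_iff_isIso₁ _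
      (R.jUpperStar.map_distinguished _ hTU)).1 (R.isZero_jUpperStar_obj_iStar_obj V₁)
    obtain ⟨e⟩ := nonempty_obj₁_iso_of_distTriang_homEquiv R.adj₄ hTZ hT₂
    exact hC.isoClosed_left (asIso (R.jUpperStar.map u) ≪≫ e).symm hU₂
  · refine R.mem_gluedCoaisle_of_forall_subsingleton hA hC (fun W hW => ?_) (fun W hW => ?_)
    · exact subsingleton_hom_cone_comp hTU hTZ hTV
        (R.subsingleton_iStar_obj_iStar_obj (hA.subsingleton_hom hW hV₁))
        (R.subsingleton_iStar_obj_jStar_obj W V₂)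
    · exact subsingleton_hom_cone_comp hTU hTZ hTV (R.subsingleton_jShriek_obj_iStar_obj W V₁)
        (R.subsingleton_jShriek_obj_jStar_obj (hC.subsingleton_hom hW hV₂))

lemma shift_mem_gluedAisle (hA : IsTStructure T₁ F₁) (hC : IsTStructure T₂ F₂) {X : B}
    (hX : X ∈ R.gluedAisle T₁ T₂) : X⟦(1 : ℤ)⟧ ∈ R.gluedAisle T₁ T₂ :=
  ⟨hA.isoClosed_left ((R.iUpperStar.commShiftIso (1 : ℤ)).app X).symm (hA.shift_mem hX.1),
    hC.isoClosed_left ((R.jUpperStar.commShiftIso (1 : ℤ)).app X).symm (hC.shift_mem hX.2)⟩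

end TriangulatedRecollement

/-- gluing `t`-structures along a recollement of triangulated
categories. -/
theorem glue_tStructure_of_recollement
    (R : TriangulatedRecollement A B C)
    (T₁ F₁ : Set A) (T₂ F₂ : Set C)
    (hA : IsTStructure T₁ F₁) (hC : IsTStructure T₂ F₂) :
    IsTStructure
      {X : B | R.iUpperStar.obj X ∈ T₁ ∧ R.jUpperStar.obj X ∈ T₂}
      {X : B | R.iShriek.obj X ∈ F₁ ∧ R.jUpperStar.obj X ∈ F₂} := by
  refine ⟨fun e hX => ?_, fun e hX => ?_, R.exists_distTriang_gluedAisle_gluedCoaisle hA hC,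
    R.hom_eq_zero_of_mem_gluedAisle_of_mem_gluedCoaisle hA hC, R.shift_mem_gluedAisle hA hC⟩
  · exact ⟨hA.isoClosed_left (R.iUpperStar.mapIso e) hX.1,
      hC.isoClosed_left (R.jUpperStar.mapIso e) hX.2⟩
  · exact ⟨hA.isoClosed_right (R.iShriek.mapIso e) hX.1,
      hC.isoClosed_right (R.jUpperStar.mapIso e) hX.2⟩

end RecollementFS
end
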